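/- arXiv:2605.04053 — 5 statements merged into one kernel-verified Lean document; each statement's English description precedes it below -/
import Mathlib

section
/- Let R = S × T be a direct product of rings. If R is a right C4*-ring, then both S and T are right C4*-rings. -/
open MulOpposite

section C4Defs

/-- A submodule is a direct summand if it has a complement. -/
def IsDirectSummand {R M : Type*} [Ring R] [AddCommGroup M] [Module R M]
    (A : Submodule R M) : Prop :=
  ∃ B : Submodule R M, IsCompl A B

/-- `M` is a `C4`-module over `R`: for every internal direct sum decomposition `M = A ⊕ B`
and every homomorphism `f : A → B` whose kernel is a direct summand of `A`, the image of `f`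
is a direct summand of `B`. -/
def IsC4Module (R M : Type*) [Ring R] [AddCommGroup M] [Module R M] : Prop :=
  ∀ A B : Submodule R M, IsCompl A B → ∀ f : A →ₗ[R] B,
    IsDirectSummand (LinearMap.ker f) → IsDirectSummand (LinearMap.range f)

/-- `M` is a `C4*`-module: every submodule of `M` is a `C4`-module. -/
def IsC4StarModule (R M : Type*) [Ring R] [AddCommGroup M] [Module R M] : Prop :=
  ∀ N : Submodule R M, IsC4Module R N

/-- `M` is square-free: no nonzero submodules `A`, `B` with `A ⊓ B = ⊥` and `A ≅ B`. -/
def IsSquareFreeModule (R M : Type*) [Ring R] [AddCommGroup M] [Module R M] : Prop :=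
  ∀ A B : Submodule R M, A ≠ ⊥ → B ≠ ⊥ → A ⊓ B = ⊥ → IsEmpty (A ≃ₗ[R] B)

/-- `M` is summand-square-free: no nonzero direct summands `A`, `B` with `A ⊓ B = ⊥`
and `A ≅ B`. -/
def IsSummandSquareFree (R M : Type*) [Ring R] [AddCommGroup M] [Module R M] : Prop :=
  ∀ A B : Submodule R M, IsDirectSummand A → IsDirectSummand B →
    A ≠ ⊥ → B ≠ ⊥ → A ⊓ B = ⊥ → IsEmpty (A ≃ₗ[R] B)

/-- `X` is an essential submodule of `A`. -/
def IsEssentialIn {R M : Type*} [Ring R] [AddCommGroup M] [Module R M]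
    (X A : Submodule R M) : Prop :=
  X ≤ A ∧ ∀ N : Submodule R M, N ≤ A → N ≠ ⊥ → X ⊓ N ≠ ⊥

/-- A triple `(X, Y, f)` where `X`, `Y` are semisimple direct summands of `M` with
`X ⊓ Y = ⊥` and `f : X ≅ Y` an isomorphism.  These are the elements of the poset `S(M)`
from the definition of semi-weak-CS modules. -/
structure SWTriple (R M : Type*) [Ring R] [AddCommGroup M] [Module R M] where
  X : Submodule R M
  Y : Submodule R M
  semisimpleX : IsSemisimpleModule R X
  semisimpleY : IsSemisimpleModule R Y
  summandX : IsDirectSummand X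
  summandY : IsDirectSummand Y
  disj : X ⊓ Y = ⊥
  f : X ≃ₗ[R] Y

/-- The extension order on the poset `S(M)` of triples: `(X₁,Y₁,f₁) ≤ (X₂,Y₂,f₂)` iff
`X₁ ≤ X₂`, `Y₁ ≤ Y₂` and `f₂` restricts to `f₁` on `X₁`. -/
def SWTriple.Extends {R M : Type*} [Ring R] [AddCommGroup M] [Module R M]
    (t s : SWTriple R M) : Prop :=
  ∃ hX : t.X ≤ s.X, t.Y ≤ s.Y ∧
    ∀ x : t.X, (s.f ⟨x.1, hX x.2⟩ : M) = (t.f x : M)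

/-- `M` is semi-weak-CS: for every chain in the poset `S(M)`, with `X` the union of the first
components and `Y` the union of the second components, there are direct summands `A`, `B`
of `M` with `X` essential in `A` and `Y` essential in `B`. -/
def IsSemiWeakCS (R M : Type*) [Ring R] [AddCommGroup M] [Module R M] : Prop :=
  ∀ C : Set (SWTriple R M), IsChain SWTriple.Extends C →
    ∃ A B : Submodule R M, IsDirectSummand A ∧ IsDirectSummand B ∧
      IsEssentialIn (⨆ t ∈ C, t.X) A ∧ IsEssentialIn (⨆ t ∈ C, t.Y) B

/-- `M` is strongly `C4*` if it is both semi-weak-CS and `C4*`. -/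
def IsStronglyC4StarModule (R M : Type*) [Ring R] [AddCommGroup M] [Module R M] : Prop :=
  IsSemiWeakCS R M ∧ IsC4StarModule R M

/-- `R` is a right `C4*`-ring: the right regular module `R_R` (i.e. `R` as a module over
`Rᵐᵒᵖ`) is a `C4*`-module. -/
def IsRightC4StarRing (R : Type*) [Ring R] : Prop := IsC4StarModule Rᵐᵒᵖ R

/-- `R` is a left `C4*`-ring: the left regular module `_RR` is a `C4*`-module. -/
def IsLeftC4StarRing (R : Type*) [Ring R] : Prop := IsC4StarModule R R

/-- `R` is a strongly right `C4*`-ring. -/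
def IsStronglyRightC4StarRing (R : Type*) [Ring R] : Prop := IsStronglyC4StarModule Rᵐᵒᵖ R

/-- `R` is a strongly left `C4*`-ring. -/
def IsStronglyLeftC4StarRing (R : Type*) [Ring R] : Prop := IsStronglyC4StarModule R R

/-- `R` is right semi-weak-CS. -/
def IsRightSemiWeakCSRing (R : Type*) [Ring R] : Prop := IsSemiWeakCS Rᵐᵒᵖ R

/-- `R` is left semi-weak-CS. -/
def IsLeftSemiWeakCSRing (R : Type*) [Ring R] : Prop := IsSemiWeakCS R R

/-- The left square-free transfer condition `LSF`: if the right regular module `T_T` is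
summand-square-free then the left regular module `_TT` is square-free. -/
def LSF (T : Type*) [Ring T] : Prop :=
  IsSummandSquareFree Tᵐᵒᵖ T → IsSquareFreeModule T T

end C4Defs

section Corner

variable {T : Type*} [Ring T]

/-- The corner `eTe = {x : T | e * x = x ∧ x * e = x}` as a non-unital subring. -/
def cornerSubring (e : T) : NonUnitalSubring T where
  carrier := {x : T | e * x = x ∧ x * e = x}
  add_mem' := by
    rintro a b ⟨ha1, ha2⟩ ⟨hb1, hb2⟩
    exact ⟨by rw [mul_add, ha1, hb1], by rw [add_mul, ha2, hb2]⟩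
  zero_mem' := ⟨mul_zero e, zero_mul e⟩
  neg_mem' := by
    rintro a ⟨ha1, ha2⟩
    exact ⟨by rw [mul_neg, ha1], by rw [neg_mul, ha2]⟩
  mul_mem' := by
    rintro a b ⟨ha1, ha2⟩ ⟨hb1, hb2⟩
    exact ⟨by rw [← mul_assoc, ha1], by rw [mul_assoc, hb2]⟩

theorem mem_cornerSubring {e x : T} :
    x ∈ cornerSubring e ↔ e * x = x ∧ x * e = x := Iff.rfl

/-- The corner ring `eTe` associated to an idempotent `e` of `T`; its identity is `e`. -/
def Corner (e : T) (he : IsIdempotentElem e) : Type _ := ↥(cornerSubring e)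

instance {e : T} {he : IsIdempotentElem e} : Ring (Corner e he) :=
  { (inferInstance : NonUnitalRing ↥(cornerSubring e)) with
    one := ⟨e, he, he⟩
    one_mul := fun x => Subtype.ext (mem_cornerSubring.mp x.2).1
    mul_one := fun x => Subtype.ext (mem_cornerSubring.mp x.2).2 }

/-- `eT = {x : T | e * x = x}` as an additive subgroup; it is a left module over the
corner ring `eTe`. -/
def leftPart (e : T) : AddSubgroup T where
  carrier := {x : T | e * x = x}
  add_mem' := by
    intro a b ha hb
    simp only [Set.mem_setOf_eq] at *
    rw [mul_add, ha, hb]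
  zero_mem' := mul_zero e
  neg_mem' := by
    intro a ha
    simp only [Set.mem_setOf_eq] at *
    rw [mul_neg, ha]

/-- `Te = {x : T | x * e = x}` as an additive subgroup; it is a right module over the
corner ring `eTe`. -/
def rightPart (e : T) : AddSubgroup T where
  carrier := {x : T | x * e = x}
  add_mem' := by
    intro a b ha hb
    simp only [Set.mem_setOf_eq] at *
    rw [add_mul, ha, hb]
  zero_mem' := zero_mul e
  neg_mem' := by
    intro a ha
    simp only [Set.mem_setOf_eq] at *
    rw [neg_mul, ha]

theorem mem_leftPart {e x : T} : x ∈ leftPart e ↔ e * x = x := Iff.rfl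

theorem mem_rightPart {e x : T} : x ∈ rightPart e ↔ x * e = x := Iff.rfl

/-- `eT` is a (unital) left module over the corner ring `eTe`. -/
instance {e : T} {he : IsIdempotentElem e} : Module (Corner e he) ↥(leftPart e) where
  smul c x := ⟨c.1 * x.1, by
    have h1 : e * c.1 = c.1 := (mem_cornerSubring.mp c.2).1
    show e * (c.1 * x.1) = c.1 * x.1
    rw [← mul_assoc, h1]⟩
  one_smul x := Subtype.ext (by
    show e * x.1 = x.1
    exact mem_leftPart.mp x.2)
  mul_smul a b x := Subtype.ext (by
    show (a.1 * b.1) * x.1 = a.1 * (b.1 * x.1)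
    rw [mul_assoc])
  smul_zero a := Subtype.ext (by
    show a.1 * 0 = 0
    exact mul_zero _)
  smul_add a x y := Subtype.ext (by
    show a.1 * (x.1 + y.1) = a.1 * x.1 + a.1 * y.1
    exact mul_add _ _ _)
  add_smul a b x := Subtype.ext (by
    show (a.1 + b.1) * x.1 = a.1 * x.1 + b.1 * x.1
    exact add_mul _ _ _)
  zero_smul x := Subtype.ext (by
    show (0 : T) * x.1 = 0
    exact zero_mul _)

/-- `Te` is a (unital) right module over the corner ring `eTe`, i.e. a module over
`(eTe)ᵐᵒᵖ`. -/
instance {e : T} {he : IsIdempotentElem e} : Module (Corner e he)ᵐᵒᵖ ↥(rightPart e) where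
  smul c x := ⟨x.1 * (unop c).1, by
    have h2 : (unop c).1 * e = (unop c).1 := (mem_cornerSubring.mp (unop c).2).2
    show (x.1 * (unop c).1) * e = x.1 * (unop c).1
    rw [mul_assoc, h2]⟩
  one_smul x := Subtype.ext (by
    show x.1 * e = x.1
    exact mem_rightPart.mp x.2)
  mul_smul a b x := Subtype.ext (by
    show x.1 * ((unop b).1 * (unop a).1) = (x.1 * (unop b).1) * (unop a).1
    rw [mul_assoc])
  smul_zero a := Subtype.ext (by
    show (0 : T) * (unop a).1 = 0
    exact zero_mul _)
  smul_add a x y := Subtype.ext (by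
    show (x.1 + y.1) * (unop a).1 = x.1 * (unop a).1 + y.1 * (unop a).1
    exact add_mul _ _ _)
  add_smul a b x := Subtype.ext (by
    show x.1 * ((unop a).1 + (unop b).1) = x.1 * (unop a).1 + x.1 * (unop b).1
    exact mul_add _ _ _)
  zero_smul x := Subtype.ext (by
    show x.1 * (0 : T) = 0
    exact mul_zero _)

/-- The hereditary side-transfer condition `HST`: for every idempotent `e` of `T`, if the
module `eT`/`Te` is summand-square-free as a right `eTe`-module (formalized on the carrier
`Te = rightPart e`, which carries the unital right `eTe`-action; at `e = 1` this is the right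
regular module `T_T`), then the left `eTe`-module (carrier `eT = leftPart e`, carrying the
unital left `eTe`-action; at `e = 1` this is the left regular module `_TT`) is square-free. -/
def HST (T : Type*) [Ring T] : Prop :=
  ∀ (e : T) (he : IsIdempotentElem e),
    IsSummandSquareFree (Corner e he)ᵐᵒᵖ ↥(rightPart e) →
      IsSquareFreeModule (Corner e he) ↥(leftPart e)

/-- The corner-stability axiom `CSA`: for every idempotent `e` of `T`, the left regular
module of the corner ring `eTe` is semi-weak-CS. -/
def CSA' (T : Type*) [Ring T] : Prop :=
  ∀ (e : T) (he : IsIdempotentElem e),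
    IsSemiWeakCS (Corner e he) (Corner e he)

end Corner

section SymmetryDatum

/-- A right-to-left symmetry datum on `R`: a ring decomposition `R ≅ S × T` where `S` is
semisimple artinian, the right regular module `T_T` is summand-square-free, the two ideals
`S`, `T` are orthogonal as right `R`-modules (no nonzero isomorphic right `R`-submodules),
and `T` satisfies `HST` and `CSA`. -/
structure RightToLeftSymmetryDatum (R S T : Type*) [Ring R] [Ring S] [Ring T] where
  iso : R ≃+* S × T
  semisimpleArtinian : IsSemisimpleRing S
  ssf : IsSummandSquareFree Tᵐᵒᵖ T
  orthogonal : ∀ A B : Submodule Rᵐᵒᵖ R,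
    (∀ a ∈ A, (iso a).2 = 0) → (∀ b ∈ B, (iso b).1 = 0) →
    A ≠ ⊥ → B ≠ ⊥ → IsEmpty (A ≃ₗ[Rᵐᵒᵖ] B)
  hst : HST T
  csa : CSA' T

end SymmetryDatum

section Beta

variable (R : Type*) [Ring R]

/-- The right annihilator `r_R(P) = {s : R | P s = 0}` of a right submodule `P` of `R`. -/
def rightAnnSet (P : Submodule Rᵐᵒᵖ R) : Set R := {s : R | ∀ p ∈ P, p * s = 0}

/-- The annihilator-bidual `β_r(P) = ℓ_R(r_R(P))`, as a right ideal of `R`. -/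
def betaR (P : Submodule Rᵐᵒᵖ R) : Submodule Rᵐᵒᵖ R where
  carrier := {r : R | ∀ s ∈ rightAnnSet R P, r * s = 0}
  add_mem' := by
    intro a b ha hb
    intro s hs
    rw [add_mul, ha s hs, hb s hs, add_zero]
  zero_mem' := by
    intro s hs
    exact zero_mul s
  smul_mem' := by
    intro c x hx s hs
    show (x * unop c) * s = 0
    rw [mul_assoc]
    refine hx _ ?_
    intro p hp
    rw [← mul_assoc]
    exact hs (p * unop c) (Submodule.smul_mem P c hp)

/-- A right ideal is a two-sided ideal which is a ring direct summand of `R` iff it is of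
the form `cR` for a central idempotent `c`. -/
def IsRingDirectSummandIdeal {R : Type*} [Ring R] (I : Submodule Rᵐᵒᵖ R) : Prop :=
  ∃ c : R, IsIdempotentElem c ∧ (∀ r : R, c * r = r * c) ∧ (∀ x : R, x ∈ I ↔ c * x = x)

/-- `R` has right semisimple annihilator asymmetry. -/
def HasRightSemisimpleAnnihilatorAsymmetry (R : Type*) [Ring R] : Prop :=
  ∃ P : Submodule Rᵐᵒᵖ R, IsSemisimpleModule Rᵐᵒᵖ P ∧ IsDirectSummand P ∧
    (¬ IsSemisimpleModule Rᵐᵒᵖ (betaR R P) ∨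
     (IsSemisimpleModule Rᵐᵒᵖ (betaR R P) ∧ ¬ IsRingDirectSummandIdeal (betaR R P)) ∨
     ¬ IsEssentialIn P (betaR R P))

end Beta

/-!
A right ideal `N` of `S` becomes a right `S × T`-module through the projection `S × T → S`, and
as such it is isomorphic to the right ideal `N × 0` of `S × T`. The `C4` condition only involves
the lattice of submodules together with kernels and images of homomorphisms, and a bijective
semilinear map along a surjective ring homomorphism identifies all of these; so `N` inherits
`C4` from `N × 0`. The same works for `T`.
-/

open Function

instance RingHomSurjective.op {A B : Type*} [Semiring A] [Semiring B] (π : A →+* B)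
    [RingHomSurjective π] : RingHomSurjective (RingHom.op π) :=
  ⟨fun b =>
    let ⟨a, ha⟩ := π.surjective (MulOpposite.unop b)
    ⟨MulOpposite.op a, congrArg MulOpposite.op ha⟩⟩

def RingHom.opSemilinearMap {A B : Type*} [Ring A] [Ring B] (π : A →+* B) :
    A →ₛₗ[RingHom.op π] B where
  toFun := π
  map_add' := π.map_add
  map_smul' r x := π.map_mul x (MulOpposite.unop r)

section Transfer

variable {R R' M M' N P : Type*} [Ring R] [Ring R'] [AddCommGroup M] [Module R M]
  [AddCommGroup M'] [Module R' M'] [AddCommGroup N] [Module R' N] [AddCommGroup P] [Module R P]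
  {σ : R' →+* R}

namespace LinearMap

theorem submoduleComap_bijective (e : M' →ₛₗ[σ] M) (he : Bijective e) (A : Submodule R M) :
    Bijective (e.submoduleComap A) :=
  ⟨fun _ _ hxy => Subtype.ext (he.1 (congrArg Subtype.val hxy)),
    e.submoduleComap_surjective_of_surjective A he.2⟩

noncomputable def factorThroughBijective (b : M' →ₛₗ[σ] P) (hb : Bijective b)
    (g : N →ₛₗ[σ] P) : N →ₗ[R'] M' where
  toFun x := surjInv hb.2 (g x)
  map_add' x y := hb.1 (by simp only [map_add, surjInv_eq])
  map_smul' r x := hb.1 (by simp only [map_smulₛₗ, surjInv_eq, RingHom.id_apply])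

variable (b : M' →ₛₗ[σ] P) (hb : Bijective b) (g : N →ₛₗ[σ] P)

@[simp]
theorem apply_factorThroughBijective (x : N) : b (factorThroughBijective b hb g x) = g x :=
  surjInv_eq hb.2 (g x)

theorem ker_factorThroughBijective : ker (factorThroughBijective b hb g) = ker g := by
  ext x
  rw [mem_ker, mem_ker, ← apply_factorThroughBijective b hb g, map_eq_zero_iff b hb.1]

theorem range_factorThroughBijective [RingHomSurjective σ] :
    range (factorThroughBijective b hb g) = (range g).comap b := by
  ext y
  simp only [mem_range]
  refine exists_congr fun x => ⟨fun h => ?_, fun h => hb.1 ?_⟩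
  · rw [← h, apply_factorThroughBijective]
  · rw [apply_factorThroughBijective, h]

end LinearMap

variable [RingHomSurjective σ]

theorem isDirectSummand_comap_iff (e : M' →ₛₗ[σ] M) (he : Bijective e) {A : Submodule R M} :
    IsDirectSummand (A.comap e) ↔ IsDirectSummand A := by
  let E := Submodule.orderIsoMapComapOfBijective e he
  constructor
  · rintro ⟨B, hB⟩
    refine ⟨E B, ?_⟩
    simpa [E, Submodule.map_comap_eq_of_surjective he.2] using E.isCompl_iff.mp hB
  · rintro ⟨B, hB⟩
    exact ⟨E.symm B, E.symm.isCompl_iff.mp hB⟩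

theorem IsC4Module.of_bijective (e : M' →ₛₗ[σ] M) (he : Bijective e)
    (h : IsC4Module R' M') : IsC4Module R M := by
  intro A B hAB f hker
  have hA := e.submoduleComap_bijective he A
  have hB := e.submoduleComap_bijective he B
  let f' := LinearMap.factorThroughBijective _ hB (f.comp (e.submoduleComap A))
  have hAB' : IsCompl (A.comap e) (B.comap e) :=
    (Submodule.orderIsoMapComapOfBijective e he).symm.isCompl_iff.mp hAB
  have hker' : IsDirectSummand (LinearMap.ker f') := by
    rw [LinearMap.ker_factorThroughBijective, LinearMap.ker_comp]
    exact (isDirectSummand_comap_iff _ hA).mpr hker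
  have hrange := h _ _ hAB' f' hker'
  rwa [LinearMap.range_factorThroughBijective,
    LinearMap.range_comp_of_range_eq_top _ (LinearMap.range_eq_top.mpr hA.2),
    isDirectSummand_comap_iff _ hB] at hrange

theorem IsC4StarModule.of_bijective (e : M' →ₛₗ[σ] M) (he : Bijective e)
    (h : IsC4StarModule R' M') : IsC4StarModule R M :=
  fun A => (h (A.comap e)).of_bijective _ (e.submoduleComap_bijective he A)

end Transfer

theorem IsC4StarModule.submodule {R M : Type*} [Ring R] [AddCommGroup M] [Module R M]
    (h : IsC4StarModule R M) (C : Submodule R M) : IsC4StarModule R C :=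
  fun N => (h (N.map C.subtype)).of_bijective
    (Submodule.equivMapOfInjective _ C.injective_subtype N).symm.toLinearMap
    (LinearEquiv.bijective _)

theorem IsRightC4StarRing.of_bijective_domRestrict {R R' : Type*} [Ring R] [Ring R']
    (π : R →+* R') (C : Submodule Rᵐᵒᵖ R) (hC : Bijective (π.opSemilinearMap.domRestrict C))
    (h : IsRightC4StarRing R) : IsRightC4StarRing R' :=
  have : RingHomSurjective π := ⟨fun y => let ⟨x, hx⟩ := hC.2 y; ⟨x, hx⟩⟩
  (h.submodule C).of_bijective _ hC

/-- If the direct product `R = S × T` is a right `C4*`-ring, then both `S` and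
`T` are right `C4*`-rings. -/
theorem right_factor_inheritance_c4star {S T : Type*} [Ring S] [Ring T]
    (h : IsRightC4StarRing (S × T)) :
    IsRightC4StarRing S ∧ IsRightC4StarRing T := by
  constructor
  · refine h.of_bijective_domRestrict (RingHom.fst S T)
      (LinearMap.ker (RingHom.snd S T).opSemilinearMap) ⟨fun x y hxy => ?_, fun s => ?_⟩
    · exact Subtype.ext (Prod.ext hxy (x.2.trans y.2.symm))
    · exact ⟨⟨(s, 0), rfl⟩, rfl⟩
  · refine h.of_bijective_domRestrict (RingHom.snd S T)
      (LinearMap.ker (RingHom.fst S T).opSemilinearMap) ⟨fun x y hxy => ?_, fun t => ?_⟩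
    · exact Subtype.ext (Prod.ext (x.2.trans y.2.symm) hxy)
    · exact ⟨⟨(0, t), rfl⟩, rfl⟩
end

section
/- A ring R is left semi-weak-CS if its left regular module _RR is semi-weak-CS. If S and T are left semi-weak-CS rings, then the direct product ring S × T is a left semi-weak-CS ring. -/
open MulOpposite

section Prod
variable {S T : Type*} [Ring S] [Ring T]

def prodSub (I : Submodule S S) (J : Submodule T T) : Submodule (S × T) (S × T) where
  carrier := {x | x.1 ∈ I ∧ x.2 ∈ J}
  add_mem' ha hb := ⟨I.add_mem ha.1 hb.1, J.add_mem ha.2 hb.2⟩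
  zero_mem' := ⟨I.zero_mem, J.zero_mem⟩
  smul_mem' c x hx := ⟨I.smul_mem c.1 hx.1, J.smul_mem c.2 hx.2⟩

theorem mem_prodSub {I : Submodule S S} {J : Submodule T T} {x : S × T} :
    x ∈ prodSub I J ↔ x.1 ∈ I ∧ x.2 ∈ J := Iff.rfl

def fstPart (N : Submodule (S × T) (S × T)) : Submodule S S where
  carrier := {s | (s, (0:T)) ∈ N}
  add_mem' {a b} ha hb := by
    have : ((a + b, (0:T)) : S × T) = (a, 0) + (b, 0) := by simp
    rw [Set.mem_setOf_eq, this]; exact N.add_mem ha hb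
  zero_mem' := N.zero_mem
  smul_mem' c x hx := by
    have : ((c • x, (0:T)) : S × T) = ((c, 0) : S × T) • ((x, 0) : S × T) := by
      simp [smul_eq_mul, Prod.mk_mul_mk]
    rw [Set.mem_setOf_eq, this]; exact N.smul_mem _ hx

def sndPart (N : Submodule (S × T) (S × T)) : Submodule T T where
  carrier := {t | ((0:S), t) ∈ N}
  add_mem' {a b} ha hb := by
    have : (((0:S), a + b) : S × T) = (0, a) + (0, b) := by simp
    rw [Set.mem_setOf_eq, this]; exact N.add_mem ha hb
  zero_mem' := N.zero_mem
  smul_mem' c x hx := by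
    have : (((0:S), c • x) : S × T) = ((0, c) : S × T) • (((0:S), x) : S × T) := by
      simp [smul_eq_mul, Prod.mk_mul_mk]
    rw [Set.mem_setOf_eq, this]; exact N.smul_mem _ hx

theorem mem_fstPart {N : Submodule (S × T) (S × T)} {s : S} :
    s ∈ fstPart N ↔ (s, (0:T)) ∈ N := Iff.rfl

theorem mem_sndPart {N : Submodule (S × T) (S × T)} {t : T} :
    t ∈ sndPart N ↔ ((0:S), t) ∈ N := Iff.rfl

theorem prod_decomp (N : Submodule (S × T) (S × T)) :
    N = prodSub (fstPart N) (sndPart N) := by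
  ext ⟨s, t⟩
  constructor
  · intro h
    refine ⟨?_, ?_⟩
    · have : ((s, (0:T)) : S × T) = ((1, 0) : S × T) • ((s, t) : S × T) := by
        simp [smul_eq_mul, Prod.mk_mul_mk]
      exact mem_fstPart.mpr (by rw [this]; exact N.smul_mem _ h)
    · have : (((0:S), t) : S × T) = ((0, 1) : S × T) • ((s, t) : S × T) := by
        simp [smul_eq_mul, Prod.mk_mul_mk]
      exact mem_sndPart.mpr (by rw [this]; exact N.smul_mem _ h)
  · rintro ⟨h1, h2⟩
    have : ((s, t) : S × T) = (s, 0) + (0, t) := by simp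
    rw [this]; exact N.add_mem h1 h2
end Prod
section Prod2
variable {S T : Type*} [Ring S] [Ring T]

theorem fstPart_prodSub (I : Submodule S S) (J : Submodule T T) :
    fstPart (prodSub I J) = I := by
  ext s; simp [mem_fstPart, mem_prodSub]

theorem sndPart_prodSub (I : Submodule S S) (J : Submodule T T) :
    sndPart (prodSub I J) = J := by
  ext t; simp [mem_sndPart, mem_prodSub]

theorem prodSub_le_iff {I : Submodule S S} {J : Submodule T T}
    {N : Submodule (S×T) (S×T)} : prodSub I J ≤ N ↔ I ≤ fstPart N ∧ J ≤ sndPart N := by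
  constructor
  · intro h
    exact ⟨fun s hs => h (mem_prodSub.mpr ⟨hs, J.zero_mem⟩),
           fun t ht => h (mem_prodSub.mpr ⟨I.zero_mem, ht⟩)⟩
  · rintro ⟨h1, h2⟩ ⟨s, t⟩ ⟨hs, ht⟩
    have : ((s, t) : S × T) = (s, 0) + (0, t) := by simp
    rw [this]; exact N.add_mem (h1 hs) (h2 ht)

theorem le_prodSub_iff {I : Submodule S S} {J : Submodule T T}
    {N : Submodule (S×T) (S×T)} : N ≤ prodSub I J ↔ fstPart N ≤ I ∧ sndPart N ≤ J := by
  constructor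
  · intro h
    exact ⟨fun s hs => (h hs).1, fun t ht => (h ht).2⟩
  · rintro ⟨h1, h2⟩ x hx
    rw [prod_decomp N] at hx
    exact ⟨h1 hx.1, h2 hx.2⟩

theorem fstPart_mono {N M : Submodule (S×T) (S×T)} (h : N ≤ M) :
    fstPart N ≤ fstPart M := fun _ hs => h hs

theorem sndPart_mono {N M : Submodule (S×T) (S×T)} (h : N ≤ M) :
    sndPart N ≤ sndPart M := fun _ ht => h ht

theorem gc_fstPart :
    GaloisConnection (fstPart (S := S) (T := T)) (fun I => prodSub I ⊤) := by
  intro N I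
  rw [le_prodSub_iff]
  exact ⟨fun h => ⟨h, le_top⟩, fun h => h.1⟩

theorem gc_sndPart :
    GaloisConnection (sndPart (S := S) (T := T)) (fun J => prodSub ⊤ J) := by
  intro N J
  rw [le_prodSub_iff]
  exact ⟨fun h => ⟨le_top, h⟩, fun h => h.2⟩

theorem fstPart_iSup {ι : Sort*} (p : ι → Submodule (S×T) (S×T)) :
    fstPart (⨆ i, p i) = ⨆ i, fstPart (p i) := gc_fstPart.l_iSup

theorem sndPart_iSup {ι : Sort*} (p : ι → Submodule (S×T) (S×T)) :
    sndPart (⨆ i, p i) = ⨆ i, sndPart (p i) := gc_sndPart.l_iSup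

theorem fstPart_bot : fstPart (⊥ : Submodule (S×T) (S×T)) = ⊥ := by
  ext s; simp [mem_fstPart, Prod.ext_iff]

theorem sndPart_bot : sndPart (⊥ : Submodule (S×T) (S×T)) = ⊥ := by
  ext t; simp [mem_sndPart, Prod.ext_iff]

theorem prodSub_bot_bot : prodSub (⊥ : Submodule S S) (⊥ : Submodule T T) = ⊥ := by
  ext ⟨s, t⟩; simp [mem_prodSub, Prod.ext_iff]

theorem prodSub_eq_bot_iff {I : Submodule S S} {J : Submodule T T} :
    prodSub I J = ⊥ ↔ I = ⊥ ∧ J = ⊥ := by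
  constructor
  · intro h
    constructor
    · rw [← fstPart_prodSub I J, h, fstPart_bot]
    · rw [← sndPart_prodSub I J, h, sndPart_bot]
  · rintro ⟨rfl, rfl⟩; exact prodSub_bot_bot

theorem prodSub_inf (I I' : Submodule S S) (J J' : Submodule T T) :
    prodSub I J ⊓ prodSub I' J' = prodSub (I ⊓ I') (J ⊓ J') := by
  ext ⟨s, t⟩
  simp only [Submodule.mem_inf, mem_prodSub]
  tauto

theorem prodSub_sup (I I' : Submodule S S) (J J' : Submodule T T) :
    prodSub I J ⊔ prodSub I' J' = prodSub (I ⊔ I') (J ⊔ J') := by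
  apply le_antisymm
  · exact sup_le (prodSub_le_iff.mpr (by simp [fstPart_prodSub, sndPart_prodSub]))
      (prodSub_le_iff.mpr (by simp [fstPart_prodSub, sndPart_prodSub]))
  · rintro ⟨s, t⟩ ⟨hs, ht⟩
    obtain ⟨a, ha, a', ha', rfl⟩ := Submodule.mem_sup.mp hs
    obtain ⟨b, hb, b', hb', rfl⟩ := Submodule.mem_sup.mp ht
    have : ((a + a', b + b') : S × T) = (a, b) + (a', b') := rfl
    rw [this]
    exact Submodule.add_mem _ (Submodule.mem_sup_left ⟨ha, hb⟩)
      (Submodule.mem_sup_right ⟨ha', hb'⟩)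

theorem prodSub_top_top : prodSub (⊤ : Submodule S S) (⊤ : Submodule T T) = ⊤ := by
  ext ⟨s, t⟩; simp [mem_prodSub]

end Prod2
section Prod3
variable {S T : Type*} [Ring S] [Ring T]

theorem isDirectSummand_fstPart {X : Submodule (S×T) (S×T)} (h : IsDirectSummand X) :
    IsDirectSummand (fstPart X) := by
  obtain ⟨C, hC⟩ := h
  refine ⟨fstPart C, ?_, ?_⟩
  · rw [disjoint_iff]
    ext s
    simp only [Submodule.mem_inf, Submodule.mem_bot, mem_fstPart]
    constructor
    · rintro ⟨h1, h2⟩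
      have : ((s, (0:T)) : S × T) ∈ X ⊓ C := ⟨h1, h2⟩
      rw [hC.inf_eq_bot] at this
      simpa [Prod.ext_iff] using this
    · rintro rfl
      exact ⟨X.zero_mem, C.zero_mem⟩
  · rw [codisjoint_iff]
    have := hC.sup_eq_top
    apply le_antisymm le_top
    intro s _
    have hs : ((s, (0:T)) : S × T) ∈ X ⊔ C := by rw [this]; trivial
    obtain ⟨a, ha, b, hb, hab⟩ := Submodule.mem_sup.mp hs
    have ha' : (a.1, (0:T)) ∈ X := by
      have : ((a.1, (0:T)) : S × T) = ((1,0) : S×T) • a := by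
        simp [smul_eq_mul, Prod.ext_iff]
      rw [this]; exact X.smul_mem _ ha
    have hb' : (b.1, (0:T)) ∈ C := by
      have : ((b.1, (0:T)) : S × T) = ((1,0) : S×T) • b := by
        simp [smul_eq_mul, Prod.ext_iff]
      rw [this]; exact C.smul_mem _ hb
    have : s = a.1 + b.1 := by
      have := congrArg Prod.fst hab; simpa using this.symm
    rw [this]
    exact Submodule.add_mem _ (Submodule.mem_sup_left ha') (Submodule.mem_sup_right hb')

theorem isDirectSummand_sndPart {X : Submodule (S×T) (S×T)} (h : IsDirectSummand X) :
    IsDirectSummand (sndPart X) := by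
  obtain ⟨C, hC⟩ := h
  refine ⟨sndPart C, ?_, ?_⟩
  · rw [disjoint_iff]
    ext t
    simp only [Submodule.mem_inf, Submodule.mem_bot, mem_sndPart]
    constructor
    · rintro ⟨h1, h2⟩
      have : (((0:S), t) : S × T) ∈ X ⊓ C := ⟨h1, h2⟩
      rw [hC.inf_eq_bot] at this
      simpa [Prod.ext_iff] using this
    · rintro rfl
      exact ⟨X.zero_mem, C.zero_mem⟩
  · rw [codisjoint_iff]
    have := hC.sup_eq_top
    apply le_antisymm le_top
    intro t _
    have hs : (((0:S), t) : S × T) ∈ X ⊔ C := by rw [this]; trivial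
    obtain ⟨a, ha, b, hb, hab⟩ := Submodule.mem_sup.mp hs
    have ha' : ((0:S), a.2) ∈ X := by
      have : (((0:S), a.2) : S × T) = ((0,1) : S×T) • a := by
        simp [smul_eq_mul, Prod.ext_iff]
      rw [this]; exact X.smul_mem _ ha
    have hb' : ((0:S), b.2) ∈ C := by
      have : (((0:S), b.2) : S × T) = ((0,1) : S×T) • b := by
        simp [smul_eq_mul, Prod.ext_iff]
      rw [this]; exact C.smul_mem _ hb
    have : t = a.2 + b.2 := by
      have := congrArg Prod.snd hab; simpa using this.symm
    rw [this]
    exact Submodule.add_mem _ (Submodule.mem_sup_left ha') (Submodule.mem_sup_right hb')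

theorem isDirectSummand_prodSub {A₁ : Submodule S S} {A₂ : Submodule T T}
    (h1 : IsDirectSummand A₁) (h2 : IsDirectSummand A₂) :
    IsDirectSummand (prodSub A₁ A₂) := by
  obtain ⟨B₁, hB₁⟩ := h1
  obtain ⟨B₂, hB₂⟩ := h2
  refine ⟨prodSub B₁ B₂, ?_, ?_⟩
  · rw [disjoint_iff, prodSub_inf, hB₁.inf_eq_bot, hB₂.inf_eq_bot, prodSub_bot_bot]
  · rw [codisjoint_iff, prodSub_sup, hB₁.sup_eq_top, hB₂.sup_eq_top, prodSub_top_top]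

theorem isEssentialIn_prodSub {X₁ A₁ : Submodule S S} {X₂ A₂ : Submodule T T}
    (h1 : IsEssentialIn X₁ A₁) (h2 : IsEssentialIn X₂ A₂) :
    IsEssentialIn (prodSub X₁ X₂) (prodSub A₁ A₂) := by
  constructor
  · exact prodSub_le_iff.mpr ⟨le_trans h1.1 (by rw [fstPart_prodSub]),
      le_trans h2.1 (by rw [sndPart_prodSub])⟩
  · intro N hN hNne
    rw [prod_decomp N] at hNne ⊢
    rw [prod_decomp N, prodSub_le_iff, fstPart_prodSub, sndPart_prodSub] at hN
    rw [Ne, prodSub_eq_bot_iff, not_and_or] at hNne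
    rw [prodSub_inf, Ne, prodSub_eq_bot_iff, not_and_or]
    rcases hNne with h | h
    · exact Or.inl (h1.2 _ hN.1 h)
    · exact Or.inr (h2.2 _ hN.2 h)
end Prod3
section Prod4
variable {S T : Type*} [Ring S] [Ring T]

instance : RingHomSurjective (RingHom.fst S T) := ⟨Prod.fst_surjective⟩
instance : RingHomSurjective (RingHom.snd S T) := ⟨Prod.snd_surjective⟩

set_option synthInstance.maxHeartbeats 1000000 in
theorem isSemisimple_fstPart {X : Submodule (S×T) (S×T)}
    (h : IsSemisimpleModule (S×T) X) : IsSemisimpleModule S (fstPart X) := by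
  haveI := h
  set X' := prodSub (fstPart X) (⊥ : Submodule T T) with hX'
  have hle : X' ≤ X := by
    rw [prodSub_le_iff]; exact ⟨le_rfl, bot_le⟩
  haveI h1 : IsSemisimpleModule (S × T) ↥(X'.comap X.subtype) :=
    IsSemisimpleModule.submodule (S × T) ↥X
  haveI h2 : IsSemisimpleModule (S × T) X' :=
    IsSemisimpleModule.congr (M := ↥(X'.comap X.subtype))
      (Submodule.comapSubtypeEquivOfLe hle).symm
  let l : X' →ₛₗ[RingHom.fst S T] (fstPart X) :=
    { toFun := fun x => ⟨x.1.1, x.2.1⟩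
      map_add' := fun a b => rfl
      map_smul' := fun c x => rfl }
  have hbij : Function.Bijective l := by
    constructor
    · intro a b hab
      apply Subtype.ext
      apply Prod.ext
      · exact congrArg Subtype.val hab
      · have ha : a.1.2 ∈ (⊥ : Submodule T T) := a.2.2
        have hb : b.1.2 ∈ (⊥ : Submodule T T) := b.2.2
        rw [Submodule.mem_bot] at ha hb
        rw [ha, hb]
    · rintro ⟨s, hs⟩
      exact ⟨⟨(s, 0), ⟨hs, Submodule.zero_mem ⊥⟩⟩, rfl⟩
  exact (l.isSemisimpleModule_iff_of_bijective hbij).mp h2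

set_option synthInstance.maxHeartbeats 1000000 in
theorem isSemisimple_sndPart {X : Submodule (S×T) (S×T)}
    (h : IsSemisimpleModule (S×T) X) : IsSemisimpleModule T (sndPart X) := by
  haveI := h
  set X' := prodSub (⊥ : Submodule S S) (sndPart X) with hX'
  have hle : X' ≤ X := by
    rw [prodSub_le_iff]; exact ⟨bot_le, le_rfl⟩
  haveI h1 : IsSemisimpleModule (S × T) ↥(X'.comap X.subtype) :=
    IsSemisimpleModule.submodule (S × T) ↥X
  haveI h2 : IsSemisimpleModule (S × T) X' :=
    IsSemisimpleModule.congr (M := ↥(X'.comap X.subtype))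
      (Submodule.comapSubtypeEquivOfLe hle).symm
  let l : X' →ₛₗ[RingHom.snd S T] (sndPart X) :=
    { toFun := fun x => ⟨x.1.2, x.2.2⟩
      map_add' := fun a b => rfl
      map_smul' := fun c x => rfl }
  have hbij : Function.Bijective l := by
    constructor
    · intro a b hab
      apply Subtype.ext
      apply Prod.ext
      · have ha : a.1.1 ∈ (⊥ : Submodule S S) := a.2.1
        have hb : b.1.1 ∈ (⊥ : Submodule S S) := b.2.1
        rw [Submodule.mem_bot] at ha hb
        rw [ha, hb]
      · exact congrArg Subtype.val hab
    · rintro ⟨t, ht⟩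
      exact ⟨⟨(0, t), ⟨Submodule.zero_mem ⊥, ht⟩⟩, rfl⟩
  exact (l.isSemisimpleModule_iff_of_bijective hbij).mp h2
end Prod4

section Prod5
variable {S T : Type*} [Ring S] [Ring T]

theorem snd_apply_eq_zero {X Y : Submodule (S×T) (S×T)} (f : X →ₗ[S×T] Y)
    (x : X) (hx : (x : S×T).2 = 0) : (f x : S×T).2 = 0 := by
  have hsm : ((1,0) : S×T) • x = x := by
    apply Subtype.ext
    show ((1,0) : S×T) • (x : S×T) = (x : S×T)
    rw [smul_eq_mul]
    exact Prod.ext (one_mul _) (by rw [hx]; exact zero_mul _)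
  have h2 : f x = ((1,0) : S×T) • f x := by
    conv_lhs => rw [← hsm, map_smul]
  have h3 := congrArg (fun y : Y => (y : S×T).2) h2
  simpa [smul_eq_mul] using h3

theorem fst_apply_eq_zero {X Y : Submodule (S×T) (S×T)} (f : X →ₗ[S×T] Y)
    (x : X) (hx : (x : S×T).1 = 0) : (f x : S×T).1 = 0 := by
  have hsm : ((0,1) : S×T) • x = x := by
    apply Subtype.ext
    show ((0,1) : S×T) • (x : S×T) = (x : S×T)
    rw [smul_eq_mul]
    exact Prod.ext (by rw [hx]; exact zero_mul _) (one_mul _)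
  have h2 : f x = ((0,1) : S×T) • f x := by
    conv_lhs => rw [← hsm, map_smul]
  have h3 := congrArg (fun y : Y => (y : S×T).1) h2
  simpa [smul_eq_mul] using h3

/-- Restriction of an `(S×T)`-linear map between ideals to first components. -/
def fstMap {X Y : Submodule (S×T) (S×T)} (f : X →ₗ[S×T] Y) :
    fstPart X →ₗ[S] fstPart Y where
  toFun a := ⟨(f ⟨(a.1, 0), a.2⟩ : S×T).1, by
    rw [mem_fstPart]
    have h2 : (f ⟨(a.1, 0), a.2⟩ : S×T).2 = 0 := snd_apply_eq_zero f _ rfl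
    have hm := (f ⟨(a.1, 0), a.2⟩).2
    have he : (((f ⟨(a.1, 0), a.2⟩ : S×T).1, (0:T)) : S×T) = (f ⟨(a.1, 0), a.2⟩ : S×T) :=
      Prod.ext rfl h2.symm
    rw [he]; exact hm⟩
  map_add' a b := by
    apply Subtype.ext
    have he : (⟨((a + b : fstPart X).1, 0), (a + b).2⟩ : X)
        = ⟨(a.1, 0), a.2⟩ + ⟨(b.1, 0), b.2⟩ := by
      apply Subtype.ext
      show (((a : S) + b, (0:T)) : S×T) = ((a.1, 0) : S×T) + (b.1, 0)
      exact Prod.ext rfl (by simp)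
    show (f _ : S×T).1 = (f _ : S×T).1 + (f _ : S×T).1
    rw [he, map_add]
    rfl
  map_smul' c a := by
    apply Subtype.ext
    have he : (⟨((c • a : fstPart X).1, 0), (c • a).2⟩ : X)
        = ((c, 0) : S×T) • ⟨(a.1, 0), a.2⟩ := by
      apply Subtype.ext
      show ((c • (a : S), (0:T)) : S×T) = ((c, 0) : S×T) • ((a.1, 0) : S×T)
      rw [smul_eq_mul, smul_eq_mul]
      exact Prod.ext rfl (by simp)
    show (f _ : S×T).1 = c • (f _ : S×T).1
    rw [he, map_smul]
    rfl

theorem fstMap_spec {X Y : Submodule (S×T) (S×T)} (f : X →ₗ[S×T] Y) (a : fstPart X) :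
    (f ⟨(a.1, 0), a.2⟩ : S×T) = (((fstMap f a : S), 0) : S×T) :=
  Prod.ext rfl (snd_apply_eq_zero f _ rfl)

/-- Restriction of an `(S×T)`-linear map between ideals to second components. -/
def sndMap {X Y : Submodule (S×T) (S×T)} (f : X →ₗ[S×T] Y) :
    sndPart X →ₗ[T] sndPart Y where
  toFun a := ⟨(f ⟨(0, a.1), a.2⟩ : S×T).2, by
    rw [mem_sndPart]
    have h2 : (f ⟨(0, a.1), a.2⟩ : S×T).1 = 0 := fst_apply_eq_zero f _ rfl
    have hm := (f ⟨(0, a.1), a.2⟩).2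
    have he : (((0:S), (f ⟨(0, a.1), a.2⟩ : S×T).2) : S×T) = (f ⟨(0, a.1), a.2⟩ : S×T) :=
      Prod.ext h2.symm rfl
    rw [he]; exact hm⟩
  map_add' a b := by
    apply Subtype.ext
    have he : (⟨(0, (a + b : sndPart X).1), (a + b).2⟩ : X)
        = ⟨(0, a.1), a.2⟩ + ⟨(0, b.1), b.2⟩ := by
      apply Subtype.ext
      show (((0:S), (a : T) + b) : S×T) = ((0, a.1) : S×T) + (0, b.1)
      exact Prod.ext (by simp) rfl
    show (f _ : S×T).2 = (f _ : S×T).2 + (f _ : S×T).2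
    rw [he, map_add]
    rfl
  map_smul' c a := by
    apply Subtype.ext
    have he : (⟨(0, (c • a : sndPart X).1), (c • a).2⟩ : X)
        = ((0, c) : S×T) • ⟨(0, a.1), a.2⟩ := by
      apply Subtype.ext
      show (((0:S), c • (a : T)) : S×T) = ((0, c) : S×T) • ((0, a.1) : S×T)
      rw [smul_eq_mul, smul_eq_mul]
      exact Prod.ext (by simp) rfl
    show (f _ : S×T).2 = c • (f _ : S×T).2
    rw [he, map_smul]
    rfl

theorem sndMap_spec {X Y : Submodule (S×T) (S×T)} (f : X →ₗ[S×T] Y) (a : sndPart X) :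
    (f ⟨(0, a.1), a.2⟩ : S×T) = (((0:S), (sndMap f a : T)) : S×T) :=
  Prod.ext (fst_apply_eq_zero f _ rfl) rfl

/-- Restriction of an `(S×T)`-linear iso between ideals to first components. -/
def fstEquiv {X Y : Submodule (S×T) (S×T)} (f : X ≃ₗ[S×T] Y) :
    fstPart X ≃ₗ[S] fstPart Y :=
  LinearEquiv.ofLinear (fstMap f.toLinearMap) (fstMap f.symm.toLinearMap)
    (by
      ext a
      show (f.toLinearMap ⟨((fstMap f.symm.toLinearMap a : S), 0), _⟩ : S×T).1 = (a : S)
      have he : (⟨((fstMap f.symm.toLinearMap a : S), 0), (fstMap f.symm.toLinearMap a).2⟩ : X)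
          = f.symm ⟨((a : S), 0), a.2⟩ := Subtype.ext (fstMap_spec f.symm.toLinearMap a).symm
      rw [he]
      show ((f (f.symm _)) : S×T).1 = (a : S)
      rw [f.apply_symm_apply])
    (by
      ext a
      show (f.symm.toLinearMap ⟨((fstMap f.toLinearMap a : S), 0), _⟩ : S×T).1 = (a : S)
      have he : (⟨((fstMap f.toLinearMap a : S), 0), (fstMap f.toLinearMap a).2⟩ : Y)
          = f ⟨((a : S), 0), a.2⟩ := Subtype.ext (fstMap_spec f.toLinearMap a).symm
      rw [he]
      show ((f.symm (f _)) : S×T).1 = (a : S)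
      rw [f.symm_apply_apply])

theorem fstEquiv_apply {X Y : Submodule (S×T) (S×T)} (f : X ≃ₗ[S×T] Y) (a : fstPart X) :
    (fstEquiv f a : S) = (f ⟨((a : S), 0), a.2⟩ : S×T).1 := rfl

/-- Restriction of an `(S×T)`-linear iso between ideals to second components. -/
def sndEquiv {X Y : Submodule (S×T) (S×T)} (f : X ≃ₗ[S×T] Y) :
    sndPart X ≃ₗ[T] sndPart Y :=
  LinearEquiv.ofLinear (sndMap f.toLinearMap) (sndMap f.symm.toLinearMap)
    (by
      ext a
      show (f.toLinearMap ⟨(0, (sndMap f.symm.toLinearMap a : T)), _⟩ : S×T).2 = (a : T)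
      have he : (⟨(0, (sndMap f.symm.toLinearMap a : T)), (sndMap f.symm.toLinearMap a).2⟩ : X)
          = f.symm ⟨(0, (a : T)), a.2⟩ := Subtype.ext (sndMap_spec f.symm.toLinearMap a).symm
      rw [he]
      show ((f (f.symm _)) : S×T).2 = (a : T)
      rw [f.apply_symm_apply])
    (by
      ext a
      show (f.symm.toLinearMap ⟨(0, (sndMap f.toLinearMap a : T)), _⟩ : S×T).2 = (a : T)
      have he : (⟨(0, (sndMap f.toLinearMap a : T)), (sndMap f.toLinearMap a).2⟩ : Y)
          = f ⟨(0, (a : T)), a.2⟩ := Subtype.ext (sndMap_spec f.toLinearMap a).symm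
      rw [he]
      show ((f.symm (f _)) : S×T).2 = (a : T)
      rw [f.symm_apply_apply])

theorem sndEquiv_apply {X Y : Submodule (S×T) (S×T)} (f : X ≃ₗ[S×T] Y) (a : sndPart X) :
    (sndEquiv f a : T) = (f ⟨(0, (a : T)), a.2⟩ : S×T).2 := rfl

theorem fstPart_inf (N M : Submodule (S×T) (S×T)) :
    fstPart (N ⊓ M) = fstPart N ⊓ fstPart M := by
  ext s; simp [mem_fstPart, Submodule.mem_inf]

theorem sndPart_inf (N M : Submodule (S×T) (S×T)) :
    sndPart (N ⊓ M) = sndPart N ⊓ sndPart M := by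
  ext t; simp [mem_sndPart, Submodule.mem_inf]

end Prod5

section Prod6
variable {S T : Type*} [Ring S] [Ring T]

/-- The component triple over `S` of a triple over `S × T`. -/
def fstTriple (t : SWTriple (S × T) (S × T)) : SWTriple S S where
  X := fstPart t.X
  Y := fstPart t.Y
  semisimpleX := isSemisimple_fstPart t.semisimpleX
  semisimpleY := isSemisimple_fstPart t.semisimpleY
  summandX := isDirectSummand_fstPart t.summandX
  summandY := isDirectSummand_fstPart t.summandY
  disj := by rw [← fstPart_inf, t.disj, fstPart_bot]
  f := fstEquiv t.f

/-- The component triple over `T` of a triple over `S × T`. -/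
def sndTriple (t : SWTriple (S × T) (S × T)) : SWTriple T T where
  X := sndPart t.X
  Y := sndPart t.Y
  semisimpleX := isSemisimple_sndPart t.semisimpleX
  semisimpleY := isSemisimple_sndPart t.semisimpleY
  summandX := isDirectSummand_sndPart t.summandX
  summandY := isDirectSummand_sndPart t.summandY
  disj := by rw [← sndPart_inf, t.disj, sndPart_bot]
  f := sndEquiv t.f

theorem fstTriple_extends {t u : SWTriple (S × T) (S × T)} (h : SWTriple.Extends t u) :
    SWTriple.Extends (fstTriple t) (fstTriple u) := by
  obtain ⟨hX, hY, hf⟩ := h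
  refine ⟨fstPart_mono hX, fstPart_mono hY, ?_⟩
  intro x
  have h1 := hf ⟨((x : S), 0), x.2⟩
  exact congrArg Prod.fst h1

theorem sndTriple_extends {t u : SWTriple (S × T) (S × T)} (h : SWTriple.Extends t u) :
    SWTriple.Extends (sndTriple t) (sndTriple u) := by
  obtain ⟨hX, hY, hf⟩ := h
  refine ⟨sndPart_mono hX, sndPart_mono hY, ?_⟩
  intro x
  have h1 := hf ⟨(0, (x : T)), x.2⟩
  exact congrArg Prod.snd h1

end Prod6

/-- If `S` and `T` are left semi-weak-CS rings (i.e. their left regular modules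
are semi-weak-CS), then `S × T` is a left semi-weak-CS ring. -/
theorem left_product_semiWeakCS {S T : Type*} [Ring S] [Ring T]
    (hS : IsLeftSemiWeakCSRing S) (hT : IsLeftSemiWeakCSRing T) :
    IsLeftSemiWeakCSRing (S × T) := by
  intro C hC
  have chS : IsChain SWTriple.Extends (fstTriple '' C) := by
    rintro _ ⟨t, ht, rfl⟩ _ ⟨u, hu, rfl⟩ hne
    have htu : t ≠ u := by rintro rfl; exact hne rfl
    rcases hC ht hu htu with h | h
    · exact Or.inl (fstTriple_extends h)
    · exact Or.inr (fstTriple_extends h)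
  have chT : IsChain SWTriple.Extends (sndTriple '' C) := by
    rintro _ ⟨t, ht, rfl⟩ _ ⟨u, hu, rfl⟩ hne
    have htu : t ≠ u := by rintro rfl; exact hne rfl
    rcases hC ht hu htu with h | h
    · exact Or.inl (sndTriple_extends h)
    · exact Or.inr (sndTriple_extends h)
  obtain ⟨A₁, B₁, hA₁, hB₁, hEA₁, hEB₁⟩ := hS _ chS
  obtain ⟨A₂, B₂, hA₂, hB₂, hEA₂, hEB₂⟩ := hT _ chT
  have hX1 : fstPart (⨆ t ∈ C, t.X) = ⨆ u ∈ fstTriple '' C, u.X := by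
    rw [iSup_image, fstPart_iSup]
    exact iSup_congr fun t => fstPart_iSup _
  have hY1 : fstPart (⨆ t ∈ C, t.Y) = ⨆ u ∈ fstTriple '' C, u.Y := by
    rw [iSup_image, fstPart_iSup]
    exact iSup_congr fun t => fstPart_iSup _
  have hX2 : sndPart (⨆ t ∈ C, t.X) = ⨆ u ∈ sndTriple '' C, u.X := by
    rw [iSup_image, sndPart_iSup]
    exact iSup_congr fun t => sndPart_iSup _
  have hY2 : sndPart (⨆ t ∈ C, t.Y) = ⨆ u ∈ sndTriple '' C, u.Y := by
    rw [iSup_image, sndPart_iSup]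
    exact iSup_congr fun t => sndPart_iSup _
  have hdX : (⨆ t ∈ C, t.X)
      = prodSub (⨆ u ∈ fstTriple '' C, u.X) (⨆ u ∈ sndTriple '' C, u.X) := by
    rw [← hX1, ← hX2]; exact prod_decomp _
  have hdY : (⨆ t ∈ C, t.Y)
      = prodSub (⨆ u ∈ fstTriple '' C, u.Y) (⨆ u ∈ sndTriple '' C, u.Y) := by
    rw [← hY1, ← hY2]; exact prod_decomp _
  exact ⟨prodSub A₁ A₂, prodSub B₁ B₂, isDirectSummand_prodSub hA₁ hA₂,
    isDirectSummand_prodSub hB₁ hB₂,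
    by rw [hdX]; exact isEssentialIn_prodSub hEA₁ hEA₂,
    by rw [hdY]; exact isEssentialIn_prodSub hEB₁ hEB₂⟩
end

section
/- Let R be a right C4*-ring. Assume that R = Σ × T for rings Σ and T, where Σ is semisimple artinian, the right regular module T_T is summand-square-free, and T satisfies the left square-free transfer condition LSF. Then R is a left C4*-ring. -/
open MulOpposite

/-! The central idempotent `e = (1, 0)` splits every left `S × T`-module `N` as `eN ⊕ (1 - e)N`,
where `eN` is semisimple (it is an `S`-module) and `(1 - e)N` embeds in `_TT`, which is
square-free by `LSF`. Let `N = A ⊕ B` and `f : A → B` with split kernel, so that a complement `K`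
of `ker f` maps isomorphically onto `range f`. The part of `range f` killed by `e` is isomorphic
to a submodule of `K`, which is then killed by `e` as well; these are disjoint isomorphic
submodules of `(1 - e)N`, hence zero. Thus `range f` lies in the semisimple module `eB`, so it is
a summand of `eB` and therefore of `B`. -/

section SquareFree

variable {R S M N : Type*} [Ring R] [Ring S] [AddCommGroup M] [Module R M]
  [AddCommGroup N] [Module S N]

theorem IsSquareFreeModule.of_injective {σ : R →+* S} [RingHomSurjective σ]
    (hN : IsSquareFreeModule S N) (l : M →ₛₗ[σ] N) (hl : Function.Injective l) :
    IsSquareFreeModule R M := by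
  intro X Y hX hY hXY
  refine ⟨fun φ => ?_⟩
  have map_ne_bot {P : Submodule R M} (hP : P ≠ ⊥) : P.map l ≠ ⊥ := by
    rw [Ne, ← Submodule.map_bot l]
    exact (Submodule.map_injective_of_injective hl).ne hP
  have hinf : X.map l ⊓ Y.map l = ⊥ := by rw [← Submodule.map_inf l hl, hXY, Submodule.map_bot]
  refine (hN _ _ (map_ne_bot hX) (map_ne_bot hY) hinf).false ?_
  have bijective_submoduleMap (P : Submodule R M) : Function.Bijective (l.submoduleMap P) :=
    ⟨fun x y h => Subtype.ext (hl (congrArg Subtype.val h)), l.submoduleMap_surjective P⟩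
  let gX := AddEquiv.ofBijective (l.submoduleMap X).toAddMonoidHom (bijective_submoduleMap X)
  let gY := AddEquiv.ofBijective (l.submoduleMap Y).toAddMonoidHom (bijective_submoduleMap Y)
  refine (gX.symm.trans (φ.toAddEquiv.trans gY)).toLinearEquiv fun c x => ?_
  obtain ⟨r, rfl⟩ := RingHomSurjective.is_surjective (σ := σ) c
  obtain ⟨x, rfl⟩ := gX.surjective x
  have hsmul : σ r • gX x = gX (r • x) := ((l.submoduleMap X).map_smulₛₗ r x).symm
  simp only [hsmul, AddEquiv.trans_apply, AddEquiv.symm_apply_apply]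
  change l.submoduleMap Y (φ (r • x)) = σ r • l.submoduleMap Y (φ x)
  rw [φ.map_smul, LinearMap.map_smulₛₗ]

theorem IsSquareFreeModule.subsingleton_of_linearEquiv {X Y : Type*}
    [AddCommGroup X] [Module R X] [AddCommGroup Y] [Module R Y]
    (hM : IsSquareFreeModule R M) (i : X →ₗ[R] M) (j : Y →ₗ[R] M) (hi : Function.Injective i)
    (hj : Function.Injective j) (hij : Disjoint (LinearMap.range i) (LinearMap.range j))
    (φ : X ≃ₗ[R] Y) : Subsingleton Y := by
  by_contra hY
  rw [not_subsingleton_iff_nontrivial] at hY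
  have : Nontrivial X := φ.toEquiv.nontrivial
  have hi₀ := Submodule.nontrivial_iff_ne_bot.mp
    (LinearEquiv.ofInjective i hi).symm.toEquiv.nontrivial
  have hj₀ := Submodule.nontrivial_iff_ne_bot.mp
    (LinearEquiv.ofInjective j hj).symm.toEquiv.nontrivial
  exact (hM _ _ hi₀ hj₀ hij.eq_bot).false
    ((LinearEquiv.ofInjective i hi).symm ≪≫ₗ φ ≪≫ₗ LinearEquiv.ofInjective j hj)

end SquareFree

theorem isDirectSummand_of_le_of_isCompl {R M : Type*} [Ring R] [AddCommGroup M] [Module R M]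
    {p q q' : Submodule R M} [IsSemisimpleModule R q] (hq : IsCompl q q') (hpq : p ≤ q) :
    IsDirectSummand p := by
  obtain ⟨r, -, hpr, hsup⟩ := Set.Iic.complementedLattice_iff.1
    (q.mapIic.complementedLattice_iff.1 ((isSemisimpleModule_iff _ _).1 ‹_›)) p hpq
  exact ⟨r ⊔ q', (disjoint_iff.2 hpr).isCompl_sup_right_of_isCompl_sup_left (hsup ▸ hq)⟩

section CentralSMul

variable {R : Type*} [Ring R] {e : R} (hc : ∀ r : R, Commute e r)
  {M N : Type*} [AddCommGroup M] [Module R M] [AddCommGroup N] [Module R N]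

variable (M) in
def centralSMul : Module.End R M where
  toFun x := e • x
  map_add' := smul_add e
  map_smul' r x := by simp only [smul_smul, (hc r).eq, RingHom.id_apply]

@[simp]
theorem centralSMul_apply (x : M) : centralSMul hc M x = e • x := rfl

variable {hc}

theorem isIdempotentElem_centralSMul (he : IsIdempotentElem e) :
    IsIdempotentElem (centralSMul hc M) :=
  LinearMap.ext fun x => by simp [Module.End.mul_apply, smul_smul, he.eq]

theorem mapsTo_range_centralSMul (g : M →ₗ[R] N) :
    ∀ x ∈ LinearMap.range (centralSMul hc M), g x ∈ LinearMap.range (centralSMul hc N) := by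
  rintro _ ⟨y, rfl⟩
  exact ⟨g y, (g.map_smul e y).symm⟩

theorem mapsTo_ker_centralSMul (g : M →ₗ[R] N) :
    ∀ x ∈ LinearMap.ker (centralSMul hc M), g x ∈ LinearMap.ker (centralSMul hc N) := by
  intro x hx
  rw [LinearMap.mem_ker, centralSMul_apply] at hx ⊢
  rw [← map_smul, hx, map_zero]

theorem isSemisimpleModule_range_centralSMul_of_injective
    [IsSemisimpleModule R (LinearMap.range (centralSMul hc N))] (g : M →ₗ[R] N)
    (hg : Function.Injective g) : IsSemisimpleModule R (LinearMap.range (centralSMul hc M)) :=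
  .of_injective (g.restrict (mapsTo_range_centralSMul g))
    fun _ _ h => Subtype.ext (hg (congrArg Subtype.val h))

theorem isSquareFreeModule_ker_centralSMul_of_injective
    (hN : IsSquareFreeModule R (LinearMap.ker (centralSMul hc N))) (g : M →ₗ[R] N)
    (hg : Function.Injective g) : IsSquareFreeModule R (LinearMap.ker (centralSMul hc M)) :=
  hN.of_injective (g.restrict (mapsTo_ker_centralSMul g))
    fun _ _ h => Subtype.ext (hg (congrArg Subtype.val h))

theorem subsingleton_of_linearEquiv_of_range_le_ker_centralSMul
    (hQ : IsSquareFreeModule R (LinearMap.ker (centralSMul hc M))) {X Y : Type*}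
    [AddCommGroup X] [Module R X] [AddCommGroup Y] [Module R Y]
    (i : X →ₗ[R] M) (j : Y →ₗ[R] M) (hi : Function.Injective i) (hj : Function.Injective j)
    (hij : Disjoint (LinearMap.range i) (LinearMap.range j))
    (hjQ : LinearMap.range j ≤ LinearMap.ker (centralSMul hc M)) (φ : X ≃ₗ[R] Y) :
    Subsingleton Y := by
  have hiQ : LinearMap.range i ≤ LinearMap.ker (centralSMul hc M) := by
    rintro _ ⟨x, rfl⟩
    have hφ : e • φ x = 0 := hj <| by
      rw [map_smul, map_zero]
      exact hjQ ⟨φ x, rfl⟩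
    have hx : e • x = 0 := φ.injective (by rw [map_smul, hφ, map_zero])
    rw [LinearMap.mem_ker, centralSMul_apply, ← map_smul, hx, map_zero]
  refine hQ.subsingleton_of_linearEquiv (i.codRestrict _ fun x => hiQ ⟨x, rfl⟩)
    (j.codRestrict _ fun y => hjQ ⟨y, rfl⟩) (fun _ _ h => hi (congrArg Subtype.val h))
    (fun _ _ h => hj (congrArg Subtype.val h)) ?_ φ
  rw [Submodule.disjoint_def]
  rintro z ⟨x, rfl⟩ ⟨y, hy⟩
  exact Subtype.ext (Submodule.disjoint_def.mp hij _ ⟨x, rfl⟩ ⟨y, congrArg Subtype.val hy⟩)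

theorem range_le_range_centralSMul (he : IsIdempotentElem e)
    (hQ : IsSquareFreeModule R (LinearMap.ker (centralSMul hc M))) {A B : Submodule R M}
    (hAB : Disjoint A B) (f : A →ₗ[R] B) (hker : IsDirectSummand (LinearMap.ker f)) :
    LinearMap.range f ≤ LinearMap.range (centralSMul hc B) := by
  obtain ⟨K, hK⟩ := hker
  set Y := LinearMap.range f ⊓ LinearMap.ker (centralSMul hc B)
  set X := K ⊓ Y.comap f
  have hrange : LinearMap.range f = K.map f := by
    rw [LinearMap.range_eq_map, ← hK.sup_eq_top, Submodule.map_sup,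
      LinearMap.le_ker_iff_map.mp le_rfl, bot_sup_eq]
  let g : X →ₗ[R] Y := f.restrict fun _ hx => hx.2
  have hinj : Function.Injective g := by
    refine (injective_iff_map_eq_zero _).2 fun x hx => Subtype.ext ?_
    exact Submodule.disjoint_def.mp hK.disjoint _ (congrArg Subtype.val hx) x.2.1
  have hsurj : Function.Surjective g := by
    rintro ⟨y, hy⟩
    obtain ⟨x, hxK, rfl⟩ := hrange ▸ hy.1
    exact ⟨⟨x, hxK, hy⟩, rfl⟩
  have hY : Y = ⊥ := by
    have := subsingleton_of_linearEquiv_of_range_le_ker_centralSMul hQ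
      (A.subtype ∘ₗ X.subtype) (B.subtype ∘ₗ Y.subtype)
      (A.injective_subtype.comp X.injective_subtype) (B.injective_subtype.comp Y.injective_subtype)
      (hAB.mono ((LinearMap.range_comp_le_range _ _).trans A.range_subtype.le)
        ((LinearMap.range_comp_le_range _ _).trans B.range_subtype.le))
      (by rintro _ ⟨y, rfl⟩; exact mapsTo_ker_centralSMul B.subtype _ (Submodule.mem_inf.1 y.2).2)
      (LinearEquiv.ofBijective g ⟨hinj, hsurj⟩)
    exact Submodule.eq_bot_of_subsingleton
  intro b hb
  rw [LinearMap.IsIdempotentElem.mem_range_iff (isIdempotentElem_centralSMul he),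
    centralSMul_apply]
  have hbY : b - e • b ∈ Y := Submodule.mem_inf.2 ⟨sub_mem hb (Submodule.smul_mem _ e hb), by
    rw [LinearMap.mem_ker, centralSMul_apply, smul_sub, smul_smul, he.eq, sub_self]⟩
  rw [hY, Submodule.mem_bot, sub_eq_zero] at hbY
  exact hbY.symm

theorem isC4Module_of_centralSMul (he : IsIdempotentElem e)
    [IsSemisimpleModule R (LinearMap.range (centralSMul hc M))]
    (hQ : IsSquareFreeModule R (LinearMap.ker (centralSMul hc M))) : IsC4Module R M := by
  intro A B hAB f hker
  have : IsSemisimpleModule R (LinearMap.range (centralSMul hc B)) :=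
    isSemisimpleModule_range_centralSMul_of_injective B.subtype B.injective_subtype
  exact isDirectSummand_of_le_of_isCompl
    (LinearMap.IsIdempotentElem.isCompl (isIdempotentElem_centralSMul he))
    (range_le_range_centralSMul he hQ hAB.disjoint f hker)

theorem isC4StarModule_of_centralSMul (he : IsIdempotentElem e)
    [IsSemisimpleModule R (LinearMap.range (centralSMul hc M))]
    (hQ : IsSquareFreeModule R (LinearMap.ker (centralSMul hc M))) : IsC4StarModule R M := by
  intro N
  have : IsSemisimpleModule R (LinearMap.range (centralSMul hc N)) :=
    isSemisimpleModule_range_centralSMul_of_injective N.subtype N.injective_subtype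
  exact isC4Module_of_centralSMul he
    (isSquareFreeModule_ker_centralSMul_of_injective hQ N.subtype N.injective_subtype)

end CentralSMul

section ProdRing

variable {S T : Type*} [Ring S] [Ring T]

variable (S T) in
theorem commute_one_zero (r : S × T) : Commute ((1, 0) : S × T) r :=
  Prod.ext (Commute.one_left r.1) (Commute.zero_left r.2)

theorem isIdempotentElem_one_zero : IsIdempotentElem ((1, 0) : S × T) :=
  Prod.ext (mul_one 1) (mul_zero 0)

theorem isSemisimpleModule_range_centralSMul_one_zero [IsSemisimpleRing S] :
    IsSemisimpleModule (S × T) (LinearMap.range (centralSMul (commute_one_zero S T) (S × T))) := by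
  let l : LinearMap.range (centralSMul (commute_one_zero S T) (S × T))
      →ₛₗ[RingHom.fst S T] S :=
    { toFun x := (x : S × T).1
      map_add' _ _ := rfl
      map_smul' _ _ := rfl }
  refine (l.isSemisimpleModule_iff_of_bijective ⟨fun x y h => ?_, fun s => ?_⟩).2 ‹_›
  · obtain ⟨_, x, rfl⟩ := x
    obtain ⟨_, y, rfl⟩ := y
    exact Subtype.ext (Prod.ext h ((zero_mul x.2).trans (zero_mul y.2).symm))
  · exact ⟨⟨(s, 0), (s, 0), Prod.ext (one_mul s) (zero_mul 0)⟩, rfl⟩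

theorem isSquareFreeModule_ker_centralSMul_one_zero (hT : IsSquareFreeModule T T) :
    IsSquareFreeModule (S × T) (LinearMap.ker (centralSMul (commute_one_zero S T) (S × T))) := by
  let l : LinearMap.ker (centralSMul (commute_one_zero S T) (S × T))
      →ₛₗ[RingHom.snd S T] T :=
    { toFun x := (x : S × T).2
      map_add' _ _ := rfl
      map_smul' _ _ := rfl }
  have fst_eq_zero (x : LinearMap.ker (centralSMul (commute_one_zero S T) (S × T))) :
      (x : S × T).1 = 0 :=
    (one_mul _).symm.trans (congrArg Prod.fst x.2)
  exact hT.of_injective l fun x y h =>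
    Subtype.ext (Prod.ext ((fst_eq_zero x).trans (fst_eq_zero y).symm) h)

end ProdRing

theorem right_to_left_c4star_general {S T : Type*} [Ring S] [Ring T]
    (hS : IsSemisimpleRing S)
    (hssf : IsSummandSquareFree Tᵐᵒᵖ T)
    (hlsf : LSF T) :
    IsLeftC4StarRing (S × T) :=
  have := isSemisimpleModule_range_centralSMul_one_zero (S := S) (T := T)
  isC4StarModule_of_centralSMul isIdempotentElem_one_zero
    (isSquareFreeModule_ker_centralSMul_one_zero (hlsf hssf))

/-- Let `R = S × T` be a right `C4*`-ring, where `S` is semisimple artinian,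
the right regular module `T_T` is summand-square-free, and `T` satisfies `LSF`.
Then `R` is a left `C4*`-ring. -/
theorem right_to_left_c4star {S T : Type*} [Ring S] [Ring T]
    (h : IsRightC4StarRing (S × T))
    (hS : IsSemisimpleRing S)
    (hssf : IsSummandSquareFree Tᵐᵒᵖ T)
    (hlsf : LSF T) :
    IsLeftC4StarRing (S × T) :=
  right_to_left_c4star_general hS hssf hlsf
end

section
/- Let R be a strongly right C4*-ring. Assume that R = Σ × T for rings Σ and T, where Σ is semisimple artinian, the right regular module T_T is summand-square-free, T satisfies the left square-free transfer condition LSF, and the left regular module _TT is semi-weak-CS. Then R is a strongly left C4*-ring. -/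
open MulOpposite

/-!
The central idempotent `e = (1, 0)` splits every left `S × T`-module `M` as `M_S ⊕ M_T`, the parts
killed by `1 - e` and by `e`, compatibly with all linear maps. If `M_S` is semisimple and `M_T` is
square-free, then `M` is `C4`: for `M = A ⊕ B`, `f : A → B` and a complement `K` of `ker f`, the
`T`-parts of `K` and of `f K` are disjoint isomorphic submodules of `M_T`, so they vanish; hence
`range f = f K` lies in the semisimple `B_S`, has a complement there, and that complement together
with `B_T` complements `range f` in `B`. Both hypotheses pass to submodules, which gives `C4*`. For
`M = S × T` they hold because `S` is semisimple and `LSF` makes `_T T` square-free.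

For semi-weak-CS, left ideals of `S × T` are products `I × J`, so a chain of triples in `S(S × T)`
projects to a chain in `S(T)`. The summands of `T` that semi-weak-CS of `_T T` provides, multiplied
by the `S`-components (summands, as `S` is semisimple), are the required summands of `S × T`.
-/

section SquareFree

open LinearMap

variable {R M N : Type*} [Ring R] [AddCommGroup M] [Module R M] [AddCommGroup N] [Module R N]

theorem isSquareFreeModule_of_injective (f : N →ₗ[R] M) (hf : Function.Injective f)
    (h : ∀ A B : Submodule R M, A ≤ range f → B ≤ range f → A ≠ ⊥ → B ≠ ⊥ → A ⊓ B = ⊥ →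
      IsEmpty (A ≃ₗ[R] B)) :
    IsSquareFreeModule R N := by
  have hmap : ∀ A : Submodule R N, A ≠ ⊥ → A.map f ≠ ⊥ := fun A hA => by
    rwa [Ne, ← Submodule.map_bot f, (Submodule.map_injective_of_injective hf).eq_iff]
  intro A B hA hB hAB
  refine ⟨fun e => (h (A.map f) (B.map f) map_le_range map_le_range (hmap A hA) (hmap B hB)
    ?_).false ((Submodule.equivMapOfInjective f hf A).symm ≪≫ₗ e ≪≫ₗ
      Submodule.equivMapOfInjective f hf B)⟩
  rw [← Submodule.map_inf f hf, hAB, Submodule.map_bot]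

theorem IsSquareFreeModule.of_injective_s9 (hM : IsSquareFreeModule R M) (f : N →ₗ[R] M)
    (hf : Function.Injective f) : IsSquareFreeModule R N :=
  isSquareFreeModule_of_injective f hf fun A B _ _ => hM A B

theorem IsSquareFreeModule.subsingleton_of_injective {W : Submodule R M}
    (hW : IsSquareFreeModule R W) (i j : N →ₗ[R] M) (hi : Function.Injective i)
    (hj : Function.Injective j) (hiW : range i ≤ W) (hjW : range j ≤ W)
    (hij : Disjoint (range i) (range j)) : Subsingleton N := by
  by_contra hN
  rw [not_subsingleton_iff_nontrivial] at hN
  obtain ⟨x, hx⟩ := exists_ne (0 : N)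
  set i' := i.codRestrict W fun x => hiW (mem_range_self i x)
  set j' := j.codRestrict W fun x => hjW (mem_range_self j x)
  have hi' : Function.Injective i' := fun a b h => hi (congrArg Subtype.val h)
  have hj' : Function.Injective j' := fun a b h => hj (congrArg Subtype.val h)
  have hne : ∀ f : N →ₗ[R] W, Function.Injective f → range f ≠ ⊥ := fun f hf h =>
    hx (hf (by simp [range_eq_bot.mp h]))
  refine (hW (range i') (range j') (hne i' hi') (hne j' hj') ?_).false
    ((LinearEquiv.ofInjective i' hi').symm ≪≫ₗ LinearEquiv.ofInjective j' hj')
  rw [← disjoint_iff, Submodule.disjoint_def]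
  rintro _ ⟨a, rfl⟩ ⟨b, hb⟩
  exact Subtype.ext (Submodule.disjoint_def.mp hij (i a) (mem_range_self i a)
    ⟨b, congrArg Subtype.val hb⟩)

end SquareFree

theorem IsCompl.isCompl_sup_of_sup_eq {α : Type*} [Lattice α] [BoundedOrder α]
    [IsModularLattice α] {a b c w : α} (hbc : IsCompl b c) (haw : Disjoint a w)
    (hab : a ⊔ w = b) : IsCompl a (w ⊔ c) := by
  have ha : a ≤ b := hab ▸ le_sup_left
  have hw : w ≤ b := hab ▸ le_sup_right
  constructor
  · have hwc : (w ⊔ c) ⊓ b = w := by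
      rw [sup_inf_assoc_of_le c hw, hbc.symm.inf_eq_bot, sup_bot_eq]
    rw [disjoint_iff, ← inf_eq_left.mpr ha, inf_assoc, inf_comm b, hwc, haw.eq_bot]
  · rw [codisjoint_iff, ← sup_assoc, hab, hbc.sup_eq_top]

theorem Submodule.exists_disjoint_sup_eq_of_le {R M : Type*} [Ring R] [AddCommGroup M]
    [Module R M] {p q : Submodule R M} [IsSemisimpleModule R p] (h : q ≤ p) :
    ∃ w, Disjoint q w ∧ q ⊔ w = p := by
  have : ComplementedLattice (Set.Iic p) := p.mapIic.complementedLattice_iff.mp inferInstance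
  obtain ⟨w, -, hqw, hsup⟩ := Set.Iic.complementedLattice_iff.mp this q h
  exact ⟨w, disjoint_iff.mpr hqw, hsup⟩

section CentralIdempotent

open LinearMap

variable {R M N : Type*} [Ring R] [AddCommGroup M] [Module R M] [AddCommGroup N] [Module R N]

namespace Submodule

variable (M) in
def torsionByCentral (c : Subring.center R) : Submodule R M where
  carrier := {x | (c : R) • x = 0}
  add_mem' {a b} (ha : (c : R) • a = 0) (hb : (c : R) • b = 0) := by
    show (c : R) • (a + b) = 0
    rw [smul_add, ha, hb, add_zero]
  zero_mem' := smul_zero _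
  smul_mem' r x (hx : (c : R) • x = 0) := by
    show (c : R) • r • x = 0
    rw [smul_smul, ← Subring.mem_center_iff.mp c.2 r, mul_smul, hx, smul_zero]

variable {c e : Subring.center R}

theorem mem_torsionByCentral {x : M} : x ∈ torsionByCentral M c ↔ (c : R) • x = 0 := Iff.rfl

theorem map_torsionByCentral_le (f : M →ₗ[R] N) :
    (torsionByCentral M c).map f ≤ torsionByCentral N c := by
  rintro _ ⟨x, hx, rfl⟩
  rw [mem_torsionByCentral, ← map_smul, mem_torsionByCentral.mp hx, map_zero]

theorem isCompl_torsionByCentral (he : IsIdempotentElem (e : R)) :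
    IsCompl (torsionByCentral M (1 - e)) (torsionByCentral M e) := by
  have hsplit : ∀ x : M, (e : R) • x + (1 - (e : R)) • x = x := fun x => by
    rw [← add_smul, add_sub_cancel, one_smul]
  constructor
  · rw [Submodule.disjoint_def]
    intro x h₁ h₂
    rw [← hsplit x, mem_torsionByCentral.mp h₂, zero_add]
    exact mem_torsionByCentral.mp h₁
  · rw [codisjoint_iff, eq_top_iff]
    intro x _
    rw [← hsplit x]
    refine add_mem_sup ?_ ?_ <;> rw [mem_torsionByCentral, smul_smul]
    · simp [sub_mul, he.eq]
    · simp [mul_sub, he.eq]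

theorem isSemisimpleModule_torsionByCentral_of_injective
    [IsSemisimpleModule R (torsionByCentral N c)] (f : M →ₗ[R] N) (hf : Function.Injective f) :
    IsSemisimpleModule R (torsionByCentral M c) :=
  .of_injective (f.restrict fun _ hx => map_torsionByCentral_le f ⟨_, hx, rfl⟩)
    ((injective_restrict_iff _).mpr (by simp [ker_eq_bot.mpr hf]))

theorem isSquareFreeModule_torsionByCentral_of_injective
    (hN : IsSquareFreeModule R (torsionByCentral N c)) (f : M →ₗ[R] N)
    (hf : Function.Injective f) : IsSquareFreeModule R (torsionByCentral M c) :=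
  hN.of_injective_s9 (f.restrict fun _ hx => map_torsionByCentral_le f ⟨_, hx, rfl⟩)
    ((injective_restrict_iff _).mpr (by simp [ker_eq_bot.mpr hf]))

end Submodule

end CentralIdempotent

section C4Criterion

open LinearMap Submodule

variable {R M : Type*} [Ring R] [AddCommGroup M] [Module R M] {e : Subring.center R}

theorem isC4Module_of_torsionByCentral (he : IsIdempotentElem (e : R))
    [IsSemisimpleModule R (torsionByCentral M (1 - e))]
    (hsq : IsSquareFreeModule R (torsionByCentral M e)) : IsC4Module R M := by
  rintro A B hAB f ⟨K, hK⟩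
  have hfK : Function.Injective (f ∘ₗ K.subtype) :=
    injective_domRestrict_iff.mpr hK.disjoint.symm
  have hrange : range (f ∘ₗ K.subtype) = range f := by
    rw [range_comp, range_subtype]
    refine le_antisymm map_le_range ?_
    rw [range_eq_map, LinearMap.map_le_map_iff, sup_comm, hK.sup_eq_top]
  -- `K` embeds into `A`, and through `f` into `B`: square-freeness kills its `e`-torsion
  have hKe : Subsingleton (torsionByCentral K e) := by
    refine hsq.subsingleton_of_injective
      ((A.subtype ∘ₗ K.subtype) ∘ₗ (torsionByCentral K e).subtype)
      ((B.subtype ∘ₗ f ∘ₗ K.subtype) ∘ₗ (torsionByCentral K e).subtype)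
      (A.injective_subtype.comp K.injective_subtype |>.comp (injective_subtype _))
      (B.injective_subtype.comp hfK |>.comp (injective_subtype _))
      (by rw [range_comp, range_subtype]; exact map_torsionByCentral_le _)
      (by rw [range_comp, range_subtype]; exact map_torsionByCentral_le _)
      (hAB.disjoint.mono ?_ ?_)
    · rintro _ ⟨x, rfl⟩
      exact coe_mem _
    · rintro _ ⟨x, rfl⟩
      exact coe_mem _
  have hfst : range f ≤ torsionByCentral B (1 - e) := by
    rw [← hrange, range_eq_map, ← eq_top_of_isCompl_bot
      (subsingleton_iff_eq_bot.mp hKe ▸ isCompl_torsionByCentral he)]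
    exact map_torsionByCentral_le _
  have := isSemisimpleModule_torsionByCentral_of_injective (c := 1 - e) B.subtype
    B.injective_subtype
  obtain ⟨W, hdisj, hsup⟩ := exists_disjoint_sup_eq_of_le hfst
  exact ⟨W ⊔ torsionByCentral B e, (isCompl_torsionByCentral he).isCompl_sup_of_sup_eq hdisj hsup⟩

theorem isC4StarModule_of_torsionByCentral (he : IsIdempotentElem (e : R))
    [IsSemisimpleModule R (torsionByCentral M (1 - e))]
    (hsq : IsSquareFreeModule R (torsionByCentral M e)) : IsC4StarModule R M := fun N =>
  have := isSemisimpleModule_torsionByCentral_of_injective (c := 1 - e) N.subtype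
    N.injective_subtype
  isC4Module_of_torsionByCentral he
    (isSquareFreeModule_torsionByCentral_of_injective hsq N.subtype N.injective_subtype)

end C4Criterion

section ProdIdeal

variable {S T : Type*} [Ring S] [Ring T]

namespace Ideal

variable {X : Ideal (S × T)}

theorem zero_prod_mem_of_mem_map_snd {y : T} (hy : y ∈ X.map (RingHom.snd S T)) :
    ((0 : S), y) ∈ X := by
  rw [ideal_prod_eq X, mem_prod]
  exact ⟨zero_mem _, hy⟩

def zeroProd (y : X.map (RingHom.snd S T)) : X :=
  ⟨((0 : S), y), zero_prod_mem_of_mem_map_snd y.2⟩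

theorem zeroProd_add (a b : X.map (RingHom.snd S T)) :
    zeroProd (a + b) = zeroProd a + zeroProd b :=
  Subtype.ext (Prod.ext (add_zero 0).symm rfl)

theorem zeroProd_smul (c : T) (y : X.map (RingHom.snd S T)) :
    zeroProd (c • y) = ((0 : S), c) • zeroProd y :=
  Subtype.ext (Prod.ext (mul_zero 0).symm rfl)

theorem map_fst_inf (X Y : Ideal (S × T)) :
    (X ⊓ Y).map (RingHom.fst S T) = X.map (RingHom.fst S T) ⊓ Y.map (RingHom.fst S T) :=
  congrArg Prod.fst (idealProdEquiv.map_inf X Y)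

theorem map_snd_inf (X Y : Ideal (S × T)) :
    (X ⊓ Y).map (RingHom.snd S T) = X.map (RingHom.snd S T) ⊓ Y.map (RingHom.snd S T) :=
  congrArg Prod.snd (idealProdEquiv.map_inf X Y)

theorem map_snd_eq_bot_iff (hX : ∀ x ∈ X, x.1 = 0) :
    X.map (RingHom.snd S T) = ⊥ ↔ X = ⊥ := by
  refine ⟨fun h => eq_bot_iff.mpr fun x hx => ?_, fun h => h ▸ map_bot⟩
  have h₂ : x.2 ∈ X.map (RingHom.snd S T) := mem_map_of_mem _ hx
  rw [h, Submodule.mem_bot] at h₂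
  exact Prod.ext (hX x hx) h₂

theorem isDirectSummand_map_snd (h : IsDirectSummand X) :
    IsDirectSummand (X.map (RingHom.snd S T)) :=
  let ⟨W, hW⟩ := h
  ⟨Ideal.map (RingHom.snd S T) W, (Prod.isCompl_iff.mp (idealProdEquiv.isCompl_iff.mp hW)).2⟩

end Ideal

open Ideal

def LinearMap.sndComponent {X Y : Ideal (S × T)} (f : X →ₗ[S × T] Y) :
    X.map (RingHom.snd S T) →ₗ[T] Y.map (RingHom.snd S T) where
  toFun y := ⟨(f (zeroProd y) : S × T).2, mem_map_of_mem _ (f _).2⟩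
  map_add' a b := by ext; simp [zeroProd_add]
  map_smul' c y := by ext; simp [zeroProd_smul]

theorem LinearMap.zeroProd_sndComponent {X Y : Ideal (S × T)} (f : X →ₗ[S × T] Y)
    (y : X.map (RingHom.snd S T)) : zeroProd (f.sndComponent y) = f (zeroProd y) := by
  refine Subtype.ext (Prod.ext ?_ rfl)
  have : zeroProd y = ((0 : S), (1 : T)) • zeroProd y :=
    Subtype.ext (Prod.ext (by simp [zeroProd]) (by simp [zeroProd]))
  rw [this, map_smul]
  simp [zeroProd]

theorem LinearMap.sndComponent_comp {X Y Z : Ideal (S × T)} (g : Y →ₗ[S × T] Z)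
    (f : X →ₗ[S × T] Y) : (g ∘ₗ f).sndComponent = g.sndComponent ∘ₗ f.sndComponent := by
  ext y
  show (g (f (zeroProd y)) : S × T).2 = (g (zeroProd (f.sndComponent y)) : S × T).2
  rw [f.zeroProd_sndComponent]

theorem LinearMap.sndComponent_id {X : Ideal (S × T)} :
    (LinearMap.id : X →ₗ[S × T] X).sndComponent = LinearMap.id := rfl

def LinearEquiv.sndComponent {X Y : Ideal (S × T)} (e : X ≃ₗ[S × T] Y) :
    X.map (RingHom.snd S T) ≃ₗ[T] Y.map (RingHom.snd S T) :=
  .ofLinearMap (e : X →ₗ[S × T] Y).sndComponent (e.symm : Y →ₗ[S × T] X).sndComponent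
    (by rw [← LinearMap.sndComponent_comp, e.comp_symm, LinearMap.sndComponent_id])
    (by rw [← LinearMap.sndComponent_comp, e.symm_comp, LinearMap.sndComponent_id])

end ProdIdeal

section ProdRing

open Ideal Submodule

variable (S T : Type*) [Ring S] [Ring T]

def prodFstIdempotent : Subring.center (S × T) :=
  ⟨(1, 0), Subring.mem_center_iff.mpr fun _ => by ext <;> simp⟩

variable {S T}

theorem isIdempotentElem_prodFstIdempotent :
    IsIdempotentElem (prodFstIdempotent S T : S × T) := by
  ext <;> simp [prodFstIdempotent]

theorem mem_torsionByCentral_prodFstIdempotent {x : S × T} :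
    x ∈ torsionByCentral (S × T) (prodFstIdempotent S T) ↔ x.1 = 0 := by
  simp [mem_torsionByCentral, prodFstIdempotent, Prod.ext_iff]

theorem mem_torsionByCentral_one_sub_prodFstIdempotent {x : S × T} :
    x ∈ torsionByCentral (S × T) (1 - prodFstIdempotent S T) ↔ x.2 = 0 := by
  simp [mem_torsionByCentral, prodFstIdempotent, Prod.ext_iff]

theorem isSemisimpleModule_torsionByCentral_one_sub_prodFstIdempotent [IsSemisimpleRing S] :
    IsSemisimpleModule (S × T) (torsionByCentral (S × T) (1 - prodFstIdempotent S T)) := by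
  let l : torsionByCentral (S × T) (1 - prodFstIdempotent S T) →ₛₗ[RingHom.fst S T] S :=
    { toFun x := (x : S × T).1, map_add' _ _ := rfl, map_smul' _ _ := rfl }
  refine (l.isSemisimpleModule_iff_of_bijective ⟨fun x y h => ?_, fun s => ?_⟩).mpr
    inferInstance
  · exact Subtype.ext (Prod.ext h ((mem_torsionByCentral_one_sub_prodFstIdempotent.mp x.2).trans
      (mem_torsionByCentral_one_sub_prodFstIdempotent.mp y.2).symm))
  · exact ⟨⟨(s, 0), mem_torsionByCentral_one_sub_prodFstIdempotent.mpr rfl⟩, rfl⟩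

theorem isSquareFreeModule_torsionByCentral_prodFstIdempotent (hT : IsSquareFreeModule T T) :
    IsSquareFreeModule (S × T) (torsionByCentral (S × T) (prodFstIdempotent S T)) := by
  refine isSquareFreeModule_of_injective (Submodule.subtype _) (injective_subtype _) ?_
  rw [range_subtype]
  intro A B hA hB hA0 hB0 hAB
  refine ⟨fun e => (hT _ _ ?_ ?_ ?_).false e.sndComponent⟩
  · rwa [Ne, map_snd_eq_bot_iff fun x hx => mem_torsionByCentral_prodFstIdempotent.mp (hA hx)]
  · rwa [Ne, map_snd_eq_bot_iff fun x hx => mem_torsionByCentral_prodFstIdempotent.mp (hB hx)]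
  · rw [← map_snd_inf, hAB, Ideal.map_bot]

theorem isSemisimpleModule_map_snd {X : Ideal (S × T)} [IsSemisimpleModule (S × T) X] :
    IsSemisimpleModule T (X.map (RingHom.snd S T)) := by
  set V := X ⊓ torsionByCentral (S × T) (prodFstIdempotent S T)
  have : IsSemisimpleModule (S × T) V :=
    .of_injective (inclusion inf_le_left) (inclusion_injective _)
  let l : V →ₛₗ[RingHom.snd S T] X.map (RingHom.snd S T) :=
    { toFun x := ⟨(x : S × T).2, mem_map_of_mem _ x.2.1⟩, map_add' _ _ := rfl,
      map_smul' _ _ := rfl }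
  refine (l.isSemisimpleModule_iff_of_bijective ⟨fun x y h => ?_, fun y => ?_⟩).mp this
  · exact Subtype.ext (Prod.ext ((mem_torsionByCentral_prodFstIdempotent.mp x.2.2).trans
      (mem_torsionByCentral_prodFstIdempotent.mp y.2.2).symm) (congrArg Subtype.val h))
  · exact ⟨⟨_, zero_prod_mem_of_mem_map_snd y.2,
      mem_torsionByCentral_prodFstIdempotent.mpr rfl⟩, rfl⟩

end ProdRing

section SemiWeakCS

open Ideal

variable {S T : Type*} [Ring S] [Ring T]

def SWTriple.sndComponent (t : SWTriple (S × T) (S × T)) : SWTriple T T where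
  X := Ideal.map (RingHom.snd S T) t.X
  Y := Ideal.map (RingHom.snd S T) t.Y
  semisimpleX := have := t.semisimpleX; isSemisimpleModule_map_snd
  semisimpleY := have := t.semisimpleY; isSemisimpleModule_map_snd
  summandX := isDirectSummand_map_snd t.summandX
  summandY := isDirectSummand_map_snd t.summandY
  disj := by rw [← map_snd_inf, t.disj, Ideal.map_bot]
  f := t.f.sndComponent

theorem SWTriple.Extends.sndComponent {t s : SWTriple (S × T) (S × T)} (h : t.Extends s) :
    t.sndComponent.Extends s.sndComponent :=
  let ⟨hX, hY, hf⟩ := h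
  ⟨map_mono hX, map_mono hY, fun y => congrArg Prod.snd (hf (zeroProd y))⟩

theorem exists_isDirectSummand_isEssentialIn_of_map_snd [IsSemisimpleRing S]
    {Z : Ideal (S × T)} {A₂ : Ideal T} (hA₂ : IsDirectSummand A₂)
    (hZ : IsEssentialIn (Z.map (RingHom.snd S T)) A₂) :
    ∃ A : Ideal (S × T), IsDirectSummand A ∧ IsEssentialIn Z A := by
  obtain ⟨D₂, hD₂⟩ := hA₂
  obtain ⟨D₁, hD₁⟩ := exists_isCompl (Z.map (RingHom.fst S T))
  have hcompl := idealProdEquiv.symm.isCompl_iff.mp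
    (Prod.isCompl_iff.mpr ⟨hD₁, hD₂⟩ : IsCompl (Z.map (RingHom.fst S T), A₂) (D₁, D₂))
  rw [idealProdEquiv_symm_apply, idealProdEquiv_symm_apply] at hcompl
  refine ⟨prod (Z.map (RingHom.fst S T)) A₂, ⟨_, hcompl⟩,
    (ideal_prod_eq Z).le.trans (Ideal.prod_mono_right hZ.1), fun N hN hN0 hZN => hN0 ?_⟩
  have hN₁ : Ideal.map (RingHom.fst S T) N ≤ Z.map (RingHom.fst S T) := by
    simpa using map_mono (f := RingHom.fst S T) hN
  have hN₂ : Ideal.map (RingHom.snd S T) N ≤ A₂ := by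
    simpa using map_mono (f := RingHom.snd S T) hN
  have hfst : Ideal.map (RingHom.fst S T) N = ⊥ := by
    rw [← inf_eq_right.mpr hN₁, ← map_fst_inf, hZN, Ideal.map_bot]
  have hsnd : Ideal.map (RingHom.snd S T) N = ⊥ := by
    by_contra h
    exact hZ.2 _ hN₂ h (by rw [← map_snd_inf, hZN, Ideal.map_bot])
  rw [ideal_prod_eq N, hfst, hsnd, prod_bot_bot]

theorem isSemiWeakCS_prod [IsSemisimpleRing S] (hT : IsSemiWeakCS T T) :
    IsSemiWeakCS (S × T) (S × T) := by
  intro C hC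
  obtain ⟨A₂, B₂, hA₂, hB₂, hXA₂, hYB₂⟩ :=
    hT _ (hC.image_of_map_rel _ _ _ fun _ _ h => h.sndComponent)
  simp only [iSup_image, SWTriple.sndComponent, ← Ideal.map_iSup] at hXA₂ hYB₂
  obtain ⟨A, hA, hXA⟩ := exists_isDirectSummand_isEssentialIn_of_map_snd hA₂ hXA₂
  obtain ⟨B, hB, hYB⟩ := exists_isDirectSummand_isEssentialIn_of_map_snd hB₂ hYB₂
  exact ⟨A, B, hA, hB, hXA, hYB⟩

end SemiWeakCS

theorem right_to_left_semiweak_general {S T : Type*} [Ring S] [Ring T]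
    (hS : IsSemisimpleRing S)
    (hssf : IsSummandSquareFree Tᵐᵒᵖ T)
    (hlsf : LSF T)
    (hswcs : IsSemiWeakCS T T) :
    IsStronglyLeftC4StarRing (S × T) := by
  have hsq : IsSquareFreeModule T T := hlsf hssf
  have := isSemisimpleModule_torsionByCentral_one_sub_prodFstIdempotent (S := S) (T := T)
  exact ⟨isSemiWeakCS_prod hswcs, isC4StarModule_of_torsionByCentral
    isIdempotentElem_prodFstIdempotent (isSquareFreeModule_torsionByCentral_prodFstIdempotent hsq)⟩

/-- Let `R = S × T` be a strongly right `C4*`-ring, where `S` is semisimple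
artinian, the right regular module `T_T` is summand-square-free, `T` satisfies `LSF`, and
the left regular module `_TT` is semi-weak-CS. Then `R` is a strongly left `C4*`-ring. -/
theorem right_to_left_semiweak {S T : Type*} [Ring S] [Ring T]
    (h : IsStronglyRightC4StarRing (S × T))
    (hS : IsSemisimpleRing S)
    (hssf : IsSummandSquareFree Tᵐᵒᵖ T)
    (hlsf : LSF T)
    (hswcs : IsSemiWeakCS T T) :
    IsStronglyLeftC4StarRing (S × T) :=
  right_to_left_semiweak_general hS hssf hlsf hswcs
end

section
/- Let R be a strongly right C4*-ring with Jacobson radical J(R) = 0. Assume that R = Σ × T for rings Σ and T, where Σ is semisimple artinian and the right regular module T_T is summand-square-free. If T satisfies the hereditary side-transfer condition HST, then R is a strongly left C4*-ring. -/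
open MulOpposite

section AuxProof

variable {R : Type*} [Ring R]

/-- Scalar multiplication by a central element, as a linear map. -/
def centralSmul (e : R) (hc : ∀ r : R, e * r = r * e)
    (M : Type*) [AddCommGroup M] [Module R M] : M →ₗ[R] M where
  toFun x := e • x
  map_add' x y := smul_add e x y
  map_smul' r x := by simp only [RingHom.id_apply, smul_smul, hc r]

/-- The key structural condition: every submodule killed by `e` is semisimple, and
the `e`-part is square-free. -/
def ECond (e : R) (M : Type*) [AddCommGroup M] [Module R M] : Prop :=
  (∀ P : Submodule R M, (∀ x ∈ P, e • x = 0) → IsSemisimpleModule R P) ∧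
  (∀ P Q : Submodule R M, (∀ x ∈ P, e • x = x) → (∀ x ∈ Q, e • x = x) →
    P ⊓ Q = ⊥ → P ≠ ⊥ → Q ≠ ⊥ → IsEmpty (P ≃ₗ[R] Q))

variable {M : Type*} [AddCommGroup M] [Module R M] {e : R}

lemma econd_hered (h : ECond e M) (N : Submodule R M) : ECond e ↥N := by
  obtain ⟨h1, h2⟩ := h
  constructor
  · intro P hP
    have hP0 : ∀ x ∈ P.map N.subtype, e • x = 0 := by
      rintro x ⟨y, hy, rfl⟩
      have h := hP y hy
      calc e • (N.subtype y) = N.subtype (e • y) := (map_smul N.subtype e y).symm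
        _ = 0 := by rw [h]; simp
    haveI := h1 _ hP0
    exact IsSemisimpleModule.congr
      (Submodule.equivMapOfInjective N.subtype N.injective_subtype P)
  · intro P Q hP hQ hPQ hPne hQne
    have key : ∀ (W : Submodule R N), (∀ x ∈ W, e • x = x) →
        ∀ x ∈ W.map N.subtype, e • x = x := by
      rintro W hW x ⟨y, hy, rfl⟩
      have h := hW y hy
      calc e • (N.subtype y) = N.subtype (e • y) := (map_smul N.subtype e y).symm
        _ = N.subtype y := by rw [h]
    have hmapne : ∀ (W : Submodule R N), W ≠ ⊥ → W.map N.subtype ≠ ⊥ := by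
      intro W hne hbot
      apply hne
      rw [eq_bot_iff]; intro x hx
      have hm : N.subtype x ∈ W.map N.subtype := ⟨x, hx, rfl⟩
      rw [hbot, Submodule.mem_bot] at hm
      exact (Submodule.mem_bot R).mpr
        (N.injective_subtype (by rw [hm, map_zero]))
    have hmapinf : (P.map N.subtype) ⊓ (Q.map N.subtype) = ⊥ := by
      rw [← Submodule.map_inf _ N.injective_subtype, hPQ, Submodule.map_bot]
    refine ⟨fun g => (h2 _ _ (key P hP) (key Q hQ) hmapinf (hmapne P hPne)
      (hmapne Q hQne)).false ?_⟩
    exact ((Submodule.equivMapOfInjective N.subtype N.injective_subtype P).symm.trans g).trans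
      (Submodule.equivMapOfInjective N.subtype N.injective_subtype Q)

lemma esmul_zero
    (h2 : ∀ P Q : Submodule R M, (∀ x ∈ P, e • x = x) → (∀ x ∈ Q, e • x = x) →
      P ⊓ Q = ⊥ → P ≠ ⊥ → Q ≠ ⊥ → IsEmpty (P ≃ₗ[R] Q))
    (hc : ∀ r : R, e * r = r * e) (hi : e * e = e)
    {V : Type*} [AddCommGroup V] [Module R V]
    {A B : Submodule R M} (hAB : A ⊓ B = ⊥)
    (f g : V →ₗ[R] M) (hf : Function.Injective f) (hg : Function.Injective g)
    (hfA : ∀ v : V, f v ∈ A) (hgB : ∀ v : V, g v ∈ B) :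
    ∀ v : V, e • v = 0 := by
  set W : Submodule R V := LinearMap.range (centralSmul e hc V) with hWdef
  have hWsmul : ∀ w ∈ W, e • w = w := by
    rintro w ⟨v, rfl⟩
    show e • ((centralSmul e hc V) v) = (centralSmul e hc V) v
    show e • (e • v) = e • v
    rw [smul_smul, hi]
  by_cases hWbot : W = ⊥
  · intro v
    have hv : e • v ∈ W := ⟨v, rfl⟩
    rw [hWbot, Submodule.mem_bot] at hv
    exact hv
  · exfalso
    have hPsmul : ∀ x ∈ W.map f, e • x = x := by
      rintro x ⟨w, hw, rfl⟩
      rw [← map_smul, hWsmul w hw]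
    have hQsmul : ∀ x ∈ W.map g, e • x = x := by
      rintro x ⟨w, hw, rfl⟩
      rw [← map_smul, hWsmul w hw]
    have hinf : (W.map f) ⊓ (W.map g) = ⊥ := by
      rw [eq_bot_iff]
      intro x hx
      obtain ⟨hx1, hx2⟩ := Submodule.mem_inf.mp hx
      have hxA : x ∈ A := by rcases hx1 with ⟨w, _, rfl⟩; exact hfA w
      have hxB : x ∈ B := by rcases hx2 with ⟨w, _, rfl⟩; exact hgB w
      rw [← hAB]; exact Submodule.mem_inf.mpr ⟨hxA, hxB⟩
    have hne : ∀ (h : V →ₗ[R] M), Function.Injective h → W.map h ≠ ⊥ := by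
      intro h hinj hbot
      apply hWbot
      rw [eq_bot_iff]; intro w hw
      have hm : h w ∈ W.map h := ⟨w, hw, rfl⟩
      rw [hbot, Submodule.mem_bot] at hm
      exact (Submodule.mem_bot R).mpr (hinj (by rw [hm, map_zero]))
    have iso : (W.map f) ≃ₗ[R] (W.map g) :=
      (Submodule.equivMapOfInjective f hf W).symm.trans (Submodule.equivMapOfInjective g hg W)
    exact (h2 _ _ hPsmul hQsmul hinf (hne f hf) (hne g hg)).false iso

lemma summand_of_le_ker
    (h1 : ∀ P : Submodule R M, (∀ x ∈ P, e • x = 0) → IsSemisimpleModule R P)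
    (hc : ∀ r : R, e * r = r * e) (hi : e * e = e)
    (P : Submodule R M) (hP : ∀ x ∈ P, e • x = 0) : IsDirectSummand P := by
  set K : Submodule R M := LinearMap.ker (centralSmul e hc M) with hKdef
  have hKmem : ∀ x : M, x ∈ K ↔ e • x = 0 := fun x => LinearMap.mem_ker
  have hPK : P ≤ K := fun x hx => (hKmem x).mpr (hP x hx)
  haveI : IsSemisimpleModule R ↥K := h1 K (fun x hx => (hKmem x).mp hx)
  obtain ⟨C', hC'⟩ := exists_isCompl (P.comap K.subtype)
  refine ⟨C'.map K.subtype ⊔ LinearMap.range (centralSmul e hc M), ?_, ?_⟩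
  · rw [Submodule.disjoint_def]
    intro x hxP hx2
    rcases Submodule.mem_sup.mp hx2 with ⟨c, hc1, w, hw, rfl⟩
    have hec : e • c = 0 := by
      rcases hc1 with ⟨c', _, rfl⟩
      exact (hKmem _).mp c'.2
    have hew : e • w = w := by
      rcases hw with ⟨y, rfl⟩
      show e • ((centralSmul e hc M) y) = (centralSmul e hc M) y
      show e • (e • y) = e • y
      rw [smul_smul, hi]
    have hx0 : e • (c + w) = 0 := hP _ hxP
    rw [smul_add, hec, zero_add, hew] at hx0
    rw [hx0, add_zero] at hxP ⊢
    rcases hc1 with ⟨c', hc'mem, rfl⟩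
    have hcP : c' ∈ P.comap K.subtype := Submodule.mem_comap.mpr hxP
    have hc0 : c' = 0 := Submodule.disjoint_def.mp hC'.disjoint c' hcP hc'mem
    rw [hc0, map_zero]
  · rw [codisjoint_iff, Submodule.eq_top_iff']
    intro x
    have hxK : x - e • x ∈ K := by
      rw [hKmem, smul_sub, smul_smul, hi, sub_self]
    have htop : (⟨x - e • x, hxK⟩ : K) ∈ P.comap K.subtype ⊔ C' := by
      rw [hC'.sup_eq_top]; trivial
    rcases Submodule.mem_sup.mp htop with ⟨p, hp, c, hcm, hpc⟩
    have hval : (p : M) + (c : M) = x - e • x := congrArg Subtype.val hpc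
    refine Submodule.mem_sup.mpr ⟨(p : M), Submodule.mem_comap.mp hp, (c : M) + e • x, ?_, ?_⟩
    · exact Submodule.add_mem _ (Submodule.mem_sup_left ⟨c, hcm, rfl⟩)
        (Submodule.mem_sup_right ⟨x, rfl⟩)
    · rw [← add_assoc, hval]
      abel

lemma isC4_of (hc : ∀ r : R, e * r = r * e) (hi : e * e = e) (h : ECond e M) :
    IsC4Module R M := by
  intro A B hAB f hker
  obtain ⟨K', hK'⟩ := hker
  have hfK : Function.Injective (f ∘ₗ K'.subtype) := by
    intro x y hxy
    have hmem : (x : ↥A) - (y : ↥A) ∈ LinearMap.ker f := by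
      rw [LinearMap.mem_ker, map_sub, sub_eq_zero]
      exact hxy
    have hK'mem : (x : ↥A) - (y : ↥A) ∈ K' := sub_mem x.2 y.2
    have h0 := Submodule.disjoint_def.mp hK'.disjoint _ hmem hK'mem
    exact Subtype.ext (sub_eq_zero.mp h0)
  have hfinj : Function.Injective (A.subtype ∘ₗ K'.subtype) :=
    A.injective_subtype.comp K'.injective_subtype
  have hginj : Function.Injective (B.subtype ∘ₗ (f ∘ₗ K'.subtype)) :=
    B.injective_subtype.comp hfK
  have hzero := esmul_zero h.2 hc hi hAB.disjoint.eq_bot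
    (A.subtype ∘ₗ K'.subtype) (B.subtype ∘ₗ (f ∘ₗ K'.subtype)) hfinj hginj
    (fun v => ((K'.subtype v) : ↥A).2) (fun v => (f (K'.subtype v)).2)
  have hrange : ∀ y ∈ LinearMap.range f, e • y = 0 := by
    rintro y ⟨a, rfl⟩
    have ha : a ∈ (LinearMap.ker f) ⊔ K' := by rw [hK'.sup_eq_top]; trivial
    rcases Submodule.mem_sup.mp ha with ⟨k, hk, k', hk', rfl⟩
    have h1 : f (k + k') = f k' := by rw [map_add, LinearMap.mem_ker.mp hk, zero_add]
    have h2 : e • (⟨k', hk'⟩ : ↥K') = 0 := hzero _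
    have h3 : e • k' = 0 := by simpa using congrArg Subtype.val h2
    rw [h1, ← map_smul, h3, map_zero]
  exact summand_of_le_ker (econd_hered ⟨h.1, h.2⟩ B).1 hc hi (LinearMap.range f) hrange

lemma swcs_of (hc : ∀ r : R, e * r = r * e) (hi : e * e = e) (h : ECond e M) :
    IsSemiWeakCS R M := by
  intro C hC
  have hzX : ∀ t : SWTriple R M, ∀ x ∈ t.X, e • x = 0 := by
    intro t
    have hz := esmul_zero h.2 hc hi t.disj t.X.subtype (t.Y.subtype ∘ₗ t.f.toLinearMap)
      t.X.injective_subtype (t.Y.injective_subtype.comp t.f.injective)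
      (fun v => v.2) (fun v => (t.f v).2)
    intro x hx
    simpa using congrArg Subtype.val (hz ⟨x, hx⟩)
  have hzY : ∀ t : SWTriple R M, ∀ x ∈ t.Y, e • x = 0 := by
    intro t
    have hd : t.Y ⊓ t.X = ⊥ := by rw [inf_comm]; exact t.disj
    have hz := esmul_zero h.2 hc hi hd t.Y.subtype (t.X.subtype ∘ₗ t.f.symm.toLinearMap)
      t.Y.injective_subtype (t.X.injective_subtype.comp t.f.symm.injective)
      (fun v => v.2) (fun v => (t.f.symm v).2)
    intro x hx
    simpa using congrArg Subtype.val (hz ⟨x, hx⟩)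
  have hXle : (⨆ t ∈ C, t.X) ≤ LinearMap.ker (centralSmul e hc M) :=
    iSup₂_le fun t ht => fun x hx => LinearMap.mem_ker.mpr (hzX t x hx)
  have hYle : (⨆ t ∈ C, t.Y) ≤ LinearMap.ker (centralSmul e hc M) :=
    iSup₂_le fun t ht => fun x hx => LinearMap.mem_ker.mpr (hzY t x hx)
  refine ⟨⨆ t ∈ C, t.X, ⨆ t ∈ C, t.Y,
    summand_of_le_ker h.1 hc hi _ (fun x hx => LinearMap.mem_ker.mp (hXle hx)),
    summand_of_le_ker h.1 hc hi _ (fun x hx => LinearMap.mem_ker.mp (hYle hx)),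
    ⟨le_rfl, fun N hN hNb => by rwa [inf_eq_right.mpr hN]⟩,
    ⟨le_rfl, fun N hN hNb => by rwa [inf_eq_right.mpr hN]⟩⟩

end AuxProof

section CornerTransport

variable {T : Type*} [Ring T]

theorem one_idem (T : Type*) [Ring T] : IsIdempotentElem (1 : T) := mul_one 1

/-- An element of `T` as an element of the corner ring `1T1`. -/
def toCorner (t : T) : Corner (1 : T) (one_idem T) := ⟨t, one_mul t, mul_one t⟩

/-- An element of `T` as an element of `T·1`. -/
def rpOne (t : T) : ↥(rightPart (1 : T)) := ⟨t, mul_one t⟩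

lemma rpOne_val (a : ↥(rightPart (1 : T))) : rpOne (a.1) = a := Subtype.ext rfl

/-- An element of `T` as an element of `1·T`. -/
def lpOne (t : T) : ↥(leftPart (1 : T)) := ⟨t, one_mul t⟩

/-- Transport a submodule of the right `1T1`-module `T·1` to a right ideal of `T`. -/
def toTsub (A : Submodule (Corner (1 : T) (one_idem T))ᵐᵒᵖ ↥(rightPart (1 : T))) :
    Submodule Tᵐᵒᵖ T where
  carrier := {t : T | rpOne t ∈ A}
  add_mem' := by
    intro a b ha hb
    simp only [Set.mem_setOf_eq] at *
    have h : rpOne (a + b) = rpOne a + rpOne b := Subtype.ext rfl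
    rw [h]; exact A.add_mem ha hb
  zero_mem' := by
    simp only [Set.mem_setOf_eq]
    have h : rpOne (0 : T) = 0 := Subtype.ext rfl
    rw [h]; exact A.zero_mem
  smul_mem' := by
    intro c x hx
    simp only [Set.mem_setOf_eq] at *
    have h : rpOne (c • x) = (MulOpposite.op (toCorner (MulOpposite.unop c))) • rpOne x :=
      Subtype.ext rfl
    rw [h]; exact A.smul_mem _ hx

lemma mem_toTsub {A : Submodule (Corner (1 : T) (one_idem T))ᵐᵒᵖ ↥(rightPart (1 : T))} {t : T} :
    t ∈ toTsub A ↔ rpOne t ∈ A := Iff.rfl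

lemma toTsub_inf {A B : Submodule (Corner (1 : T) (one_idem T))ᵐᵒᵖ ↥(rightPart (1 : T))}
    (h : A ⊓ B = ⊥) : toTsub A ⊓ toTsub B = ⊥ := by
  rw [eq_bot_iff]; intro t ht
  obtain ⟨h1, h2⟩ := Submodule.mem_inf.mp ht
  have hm : rpOne t ∈ A ⊓ B := Submodule.mem_inf.mpr ⟨h1, h2⟩
  rw [h, Submodule.mem_bot] at hm
  exact (Submodule.mem_bot _).mpr (congrArg Subtype.val hm)

lemma toTsub_ne_bot {A : Submodule (Corner (1 : T) (one_idem T))ᵐᵒᵖ ↥(rightPart (1 : T))}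
    (h : A ≠ ⊥) : toTsub A ≠ ⊥ := by
  intro hbot
  apply h
  rw [eq_bot_iff]; intro a ha
  have hm : a.1 ∈ toTsub A := by rw [mem_toTsub, rpOne_val]; exact ha
  rw [hbot, Submodule.mem_bot] at hm
  have : a = 0 := Subtype.ext hm
  rw [this]; exact Submodule.zero_mem ⊥

lemma toTsub_isCompl {A B : Submodule (Corner (1 : T) (one_idem T))ᵐᵒᵖ ↥(rightPart (1 : T))}
    (h : IsCompl A B) : IsCompl (toTsub A) (toTsub B) := by
  constructor
  · rw [Submodule.disjoint_def]
    intro t ht1 ht2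
    exact congrArg Subtype.val (Submodule.disjoint_def.mp h.disjoint (rpOne t) ht1 ht2)
  · rw [codisjoint_iff, Submodule.eq_top_iff']
    intro t
    have hm : rpOne t ∈ A ⊔ B := by rw [h.sup_eq_top]; trivial
    rcases Submodule.mem_sup.mp hm with ⟨a, ha, b, hb, hab⟩
    refine Submodule.mem_sup.mpr ⟨a.1, ?_, b.1, ?_, ?_⟩
    · rw [mem_toTsub, rpOne_val]; exact ha
    · rw [mem_toTsub, rpOne_val]; exact hb
    · exact congrArg Subtype.val hab

/-- Lift an element of `toTsub A` to `A`. -/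
def liftA {A : Submodule (Corner (1 : T) (one_idem T))ᵐᵒᵖ ↥(rightPart (1 : T))}
    (x : ↥(toTsub A)) : ↥A := ⟨rpOne x.1, x.2⟩

def downA {A : Submodule (Corner (1 : T) (one_idem T))ᵐᵒᵖ ↥(rightPart (1 : T))}
    (a : ↥A) : ↥(toTsub A) := ⟨a.1.1, by rw [mem_toTsub, rpOne_val]; exact a.2⟩

lemma lift_down {A : Submodule (Corner (1 : T) (one_idem T))ᵐᵒᵖ ↥(rightPart (1 : T))}
    (a : ↥A) : liftA (downA a) = a := Subtype.ext (rpOne_val _)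

lemma down_lift {A : Submodule (Corner (1 : T) (one_idem T))ᵐᵒᵖ ↥(rightPart (1 : T))}
    (x : ↥(toTsub A)) : downA (liftA x) = x := Subtype.ext rfl

lemma liftA_add {A : Submodule (Corner (1 : T) (one_idem T))ᵐᵒᵖ ↥(rightPart (1 : T))}
    (x y : ↥(toTsub A)) : liftA (x + y) = liftA x + liftA y :=
  Subtype.ext (Subtype.ext rfl)

lemma downA_add {A : Submodule (Corner (1 : T) (one_idem T))ᵐᵒᵖ ↥(rightPart (1 : T))}
    (a b : ↥A) : downA (a + b) = downA a + downA b := Subtype.ext rfl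

lemma liftA_smul {A : Submodule (Corner (1 : T) (one_idem T))ᵐᵒᵖ ↥(rightPart (1 : T))}
    (m : Tᵐᵒᵖ) (x : ↥(toTsub A)) :
    liftA (m • x) = (MulOpposite.op (toCorner (MulOpposite.unop m))) • liftA x :=
  Subtype.ext (Subtype.ext rfl)

lemma downA_smul {A : Submodule (Corner (1 : T) (one_idem T))ᵐᵒᵖ ↥(rightPart (1 : T))}
    (m : Tᵐᵒᵖ) (a : ↥A) :
    downA ((MulOpposite.op (toCorner (MulOpposite.unop m))) • a) = m • downA a :=
  Subtype.ext rfl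

/-- Transport a linear isomorphism along `toTsub`. -/
def toTsub_equiv {A B : Submodule (Corner (1 : T) (one_idem T))ᵐᵒᵖ ↥(rightPart (1 : T))}
    (g : A ≃ₗ[(Corner (1 : T) (one_idem T))ᵐᵒᵖ] B) : (toTsub A) ≃ₗ[Tᵐᵒᵖ] (toTsub B) where
  toFun x := downA (g (liftA x))
  invFun y := downA (g.symm (liftA y))
  left_inv x := by
    show downA (g.symm (liftA (downA (g (liftA x))))) = x
    rw [lift_down, g.symm_apply_apply, down_lift]
  right_inv y := by
    show downA (g (liftA (downA (g.symm (liftA y))))) = y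
    rw [lift_down, g.apply_symm_apply, down_lift]
  map_add' x y := by
    show downA (g (liftA (x + y))) = downA (g (liftA x)) + downA (g (liftA y))
    rw [liftA_add, map_add, downA_add]
  map_smul' m x := by
    show downA (g (liftA (m • x))) = m • downA (g (liftA x))
    rw [liftA_smul, map_smul, downA_smul]

/-- Transport a left ideal of `T` to a submodule of the left `1T1`-module `1·T`. -/
def toLsub (A : Submodule T T) :
    Submodule (Corner (1 : T) (one_idem T)) ↥(leftPart (1 : T)) where
  carrier := {x : ↥(leftPart (1 : T)) | x.1 ∈ A}
  add_mem' := by intro a b ha hb; exact A.add_mem ha hb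
  zero_mem' := A.zero_mem
  smul_mem' := by
    intro c x hx
    show (c • x).1 ∈ A
    show c.1 * x.1 ∈ A
    rw [← smul_eq_mul]
    exact A.smul_mem c.1 hx

lemma toLsub_ne_bot {A : Submodule T T} (h : A ≠ ⊥) : toLsub A ≠ ⊥ := by
  rw [Submodule.ne_bot_iff] at h ⊢
  obtain ⟨a, ha, ha0⟩ := h
  exact ⟨lpOne a, ha, fun h0 => ha0 (congrArg Subtype.val h0)⟩

lemma toLsub_inf {A B : Submodule T T} (h : A ⊓ B = ⊥) : toLsub A ⊓ toLsub B = ⊥ := by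
  rw [eq_bot_iff]; intro x hx
  obtain ⟨h1, h2⟩ := Submodule.mem_inf.mp hx
  have hm : x.1 ∈ A ⊓ B := Submodule.mem_inf.mpr ⟨h1, h2⟩
  rw [h, Submodule.mem_bot] at hm
  exact (Submodule.mem_bot _).mpr (Subtype.ext hm)

def liftL {A : Submodule T T} (x : ↥(toLsub A)) : ↥A := ⟨x.1.1, x.2⟩

def downL {A : Submodule T T} (a : ↥A) : ↥(toLsub A) := ⟨lpOne a.1, a.2⟩

lemma liftL_downL {A : Submodule T T} (a : ↥A) : liftL (downL a) = a := Subtype.ext rfl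

lemma downL_liftL {A : Submodule T T} (x : ↥(toLsub A)) : downL (liftL x) = x :=
  Subtype.ext (Subtype.ext rfl)

lemma liftL_add {A : Submodule T T} (x y : ↥(toLsub A)) :
    liftL (x + y) = liftL x + liftL y := Subtype.ext rfl

lemma downL_add {A : Submodule T T} (a b : ↥A) :
    downL (a + b) = downL a + downL b := Subtype.ext (Subtype.ext rfl)

lemma liftL_smul {A : Submodule T T} (c : Corner (1 : T) (one_idem T)) (x : ↥(toLsub A)) :
    liftL (c • x) = c.1 • liftL x := Subtype.ext rfl

lemma downL_smul {A : Submodule T T} (c : Corner (1 : T) (one_idem T)) (a : ↥A) :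
    downL (c.1 • a) = c • downL a := Subtype.ext (Subtype.ext rfl)

def toLsub_equiv {A B : Submodule T T} (g : A ≃ₗ[T] B) :
    (toLsub A) ≃ₗ[Corner (1 : T) (one_idem T)] (toLsub B) where
  toFun x := downL (g (liftL x))
  invFun y := downL (g.symm (liftL y))
  left_inv x := by
    show downL (g.symm (liftL (downL (g (liftL x))))) = x
    rw [liftL_downL, g.symm_apply_apply, downL_liftL]
  right_inv y := by
    show downL (g (liftL (downL (g.symm (liftL y))))) = y
    rw [liftL_downL, g.apply_symm_apply, downL_liftL]
  map_add' x y := by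
    show downL (g (liftL (x + y))) = downL (g (liftL x)) + downL (g (liftL y))
    rw [liftL_add, map_add, downL_add]
  map_smul' c x := by
    show downL (g (liftL (c • x))) = c • downL (g (liftL x))
    rw [liftL_smul, map_smul, downL_smul]

lemma sqf_of_hst (hssf : IsSummandSquareFree Tᵐᵒᵖ T) (hhst : HST T) :
    IsSquareFreeModule T T := by
  have step2 : IsSquareFreeModule (Corner (1 : T) (one_idem T)) ↥(leftPart (1 : T)) := by
    apply hhst (1 : T) (one_idem T)
    intro A B hA hB hAne hBne hABinf
    refine ⟨fun g => ?_⟩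
    have hdA : IsDirectSummand (toTsub A) := hA.elim fun A' h' => ⟨toTsub A', toTsub_isCompl h'⟩
    have hdB : IsDirectSummand (toTsub B) := hB.elim fun B' h' => ⟨toTsub B', toTsub_isCompl h'⟩
    exact (hssf _ _ hdA hdB (toTsub_ne_bot hAne) (toTsub_ne_bot hBne)
      (toTsub_inf hABinf)).false (toTsub_equiv g)
  intro A B hAne hBne hAB
  refine ⟨fun g => ?_⟩
  exact (step2 _ _ (toLsub_ne_bot hAne) (toLsub_ne_bot hBne) (toLsub_inf hAB)).false
    (toLsub_equiv g)

end CornerTransport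

section ProdPart

variable {S T : Type*} [Ring S] [Ring T]

/-- The second-component right ideal of a left ideal of `S × T` contained in `0 × T`. -/
def sndSub (P : Submodule (S × T) (S × T)) : Submodule T T where
  carrier := {t : T | ((0 : S), t) ∈ P}
  zero_mem' := P.zero_mem
  add_mem' := by
    intro a b ha hb
    simp only [Set.mem_setOf_eq] at *
    have h := P.add_mem ha hb
    simpa using h
  smul_mem' := by
    intro c t ht
    simp only [Set.mem_setOf_eq] at *
    have h := P.smul_mem (((0 : S), c) : S × T) ht
    simpa [smul_eq_mul] using h

lemma mem_sndSub {P : Submodule (S × T) (S × T)} {t : T} :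
    t ∈ sndSub P ↔ ((0 : S), t) ∈ P := Iff.rfl

lemma sndSub_ne_bot {P : Submodule (S × T) (S × T)} (h1 : ∀ x ∈ P, x.1 = 0)
    (h : P ≠ ⊥) : sndSub P ≠ ⊥ := by
  rw [Submodule.ne_bot_iff] at h ⊢
  obtain ⟨x, hx, hx0⟩ := h
  have hx1 : x = ((0 : S), x.2) := by
    ext
    · exact h1 x hx
    · rfl
  refine ⟨x.2, ?_, fun h2 => hx0 ?_⟩
  · rw [mem_sndSub, ← hx1]; exact hx
  · rw [hx1, h2]; rfl

lemma sndSub_inf {P Q : Submodule (S × T) (S × T)} (h : P ⊓ Q = ⊥) :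
    sndSub P ⊓ sndSub Q = ⊥ := by
  rw [eq_bot_iff]; intro t ht
  obtain ⟨ht1, ht2⟩ := Submodule.mem_inf.mp ht
  have hm : (((0 : S), t) : S × T) ∈ P ⊓ Q := Submodule.mem_inf.mpr ⟨ht1, ht2⟩
  rw [h, Submodule.mem_bot] at hm
  exact (Submodule.mem_bot _).mpr (congrArg Prod.snd hm)

def liftP {P : Submodule (S × T) (S × T)} (t : ↥(sndSub P)) : ↥P := ⟨((0 : S), t.1), t.2⟩

def downP {P : Submodule (S × T) (S × T)} (h1 : ∀ x ∈ P, x.1 = 0) (x : ↥P) : ↥(sndSub P) :=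
  ⟨x.1.2, by
    rw [mem_sndSub]
    have hx1 : ((0 : S), x.1.2) = x.1 := by
      ext
      · exact (h1 x.1 x.2).symm
      · rfl
    rw [hx1]; exact x.2⟩

lemma downP_liftP {P : Submodule (S × T) (S × T)} (h1 : ∀ x ∈ P, x.1 = 0) (t : ↥(sndSub P)) :
    downP h1 (liftP t) = t := Subtype.ext rfl

lemma liftP_downP {P : Submodule (S × T) (S × T)} (h1 : ∀ x ∈ P, x.1 = 0) (x : ↥P) :
    liftP (downP h1 x) = x := by
  apply Subtype.ext
  show ((0 : S), x.1.2) = x.1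
  ext
  · exact (h1 x.1 x.2).symm
  · rfl

lemma liftP_add {P : Submodule (S × T) (S × T)} (a b : ↥(sndSub P)) :
    liftP (a + b) = liftP a + liftP b := by
  apply Subtype.ext
  show ((0 : S), a.1 + b.1) = ((0 : S), a.1) + ((0 : S), b.1)
  ext
  · exact (zero_add (0 : S)).symm
  · rfl

lemma liftP_smul {P : Submodule (S × T) (S × T)} (c : T) (t : ↥(sndSub P)) :
    liftP (c • t) = (((0 : S), c) : S × T) • liftP t := by
  apply Subtype.ext
  show ((0 : S), c • t.1) = (((0 : S), c) : S × T) • ((0 : S), t.1)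
  have : (((0 : S), c) : S × T) • (((0 : S), t.1) : S × T) = ((0 : S), c) * ((0 : S), t.1) := rfl
  rw [this]
  ext
  · show (0 : S) = 0 * 0
    rw [zero_mul]
  · show c • t.1 = c * t.1
    rw [smul_eq_mul]

lemma downP_add {P : Submodule (S × T) (S × T)} (h1 : ∀ x ∈ P, x.1 = 0) (a b : ↥P) :
    downP h1 (a + b) = downP h1 a + downP h1 b := Subtype.ext rfl

lemma downP_smul {P : Submodule (S × T) (S × T)} (h1 : ∀ x ∈ P, x.1 = 0) (c : T) (x : ↥P) :
    downP h1 ((((0 : S), c) : S × T) • x) = c • downP h1 x := Subtype.ext rfl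

def sndSub_equiv {P Q : Submodule (S × T) (S × T)} (h1P : ∀ x ∈ P, x.1 = 0)
    (h1Q : ∀ x ∈ Q, x.1 = 0) (g : P ≃ₗ[S × T] Q) : (sndSub P) ≃ₗ[T] (sndSub Q) where
  toFun t := downP h1Q (g (liftP t))
  invFun t := downP h1P (g.symm (liftP t))
  left_inv t := by
    show downP h1P (g.symm (liftP (downP h1Q (g (liftP t))))) = t
    rw [liftP_downP, g.symm_apply_apply, downP_liftP]
  right_inv t := by
    show downP h1Q (g (liftP (downP h1P (g.symm (liftP t))))) = t
    rw [liftP_downP, g.apply_symm_apply, downP_liftP]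
  map_add' a b := by
    show downP h1Q (g (liftP (a + b))) = downP h1Q (g (liftP a)) + downP h1Q (g (liftP b))
    rw [liftP_add, map_add, downP_add]
  map_smul' c t := by
    show downP h1Q (g (liftP (c • t))) = c • downP h1Q (g (liftP t))
    rw [liftP_smul, map_smul, downP_smul]

lemma econd_prod (hS : IsSemisimpleRing S) (hsqf : IsSquareFreeModule T T) :
    ECond ((((0 : S), (1 : T))) : S × T) (S × T) := by
  constructor
  · intro P hP
    have hP2 : ∀ x ∈ P, x.2 = 0 := by
      intro x hx
      have h := congrArg Prod.snd (hP x hx)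
      simpa [smul_eq_mul] using h
    haveI : RingHomSurjective (RingHom.fst S T) := ⟨Prod.fst_surjective⟩
    let l : ↥P →ₛₗ[RingHom.fst S T] S :=
      { toFun := fun x => x.1.1,
        map_add' := fun x y => rfl,
        map_smul' := fun r x => rfl }
    have hinj : Function.Injective l := by
      intro x y hxy
      apply Subtype.ext
      ext
      · exact hxy
      · rw [hP2 _ x.2, hP2 _ y.2]
    have hbij : Function.Bijective (l.rangeRestrict) :=
      ⟨(LinearMap.injective_rangeRestrict_iff l).mpr hinj, LinearMap.surjective_rangeRestrict l⟩
    rw [LinearMap.isSemisimpleModule_iff_of_bijective (l.rangeRestrict) hbij]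
    infer_instance
  · intro P Q hP hQ hPQ hPne hQne
    have hP1 : ∀ x ∈ P, x.1 = 0 := by
      intro x hx
      have h := congrArg Prod.fst (hP x hx)
      simpa [smul_eq_mul] using h.symm
    have hQ1 : ∀ x ∈ Q, x.1 = 0 := by
      intro x hx
      have h := congrArg Prod.fst (hQ x hx)
      simpa [smul_eq_mul] using h.symm
    refine ⟨fun g => ?_⟩
    exact (hsqf _ _ (sndSub_ne_bot hP1 hPne) (sndSub_ne_bot hQ1 hQne)
      (sndSub_inf hPQ)).false (sndSub_equiv hP1 hQ1 g)

end ProdPart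


/-- Let `R = S × T` be a strongly right `C4*`-ring with Jacobson radical zero,
where `S` is semisimple artinian and the right regular module `T_T` is summand-square-free.
If `T` satisfies `HST`, then `R` is a strongly left `C4*`-ring. -/
theorem radzero_transfer {S T : Type*} [Ring S] [Ring T]
    (h : IsStronglyRightC4StarRing (S × T))
    (hJ : Ideal.jacobson (⊥ : Ideal (S × T)) = ⊥)
    (hS : IsSemisimpleRing S)
    (hssf : IsSummandSquareFree Tᵐᵒᵖ T)
    (hhst : HST T) :
    IsStronglyLeftC4StarRing (S × T) := by
  have hsqf : IsSquareFreeModule T T := sqf_of_hst hssf hhst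
  have hE : ECond ((((0 : S), (1 : T))) : S × T) (S × T) := econd_prod hS hsqf
  have hc : ∀ r : S × T, (((0 : S), (1 : T)) : S × T) * r = r * ((0 : S), (1 : T)) := by
    intro r
    ext
    · simp
    · simp
  have hi : ((((0 : S), (1 : T))) : S × T) * (((0 : S), (1 : T))) = (((0 : S), (1 : T))) := by
    ext
    · simp
    · simp
  exact ⟨swcs_of hc hi hE, fun N => isC4_of hc hi (econd_hered hE N)⟩
end
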